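/- arXiv:2502.12310 — 6 statements merged into one kernel-verified Lean document; each statement's English description precedes it below -/
import Mathlib

section
/- Let A₁, A₂ ∈ ℝ^{d×d} satisfy ρ(A₁) < 1 and ρ(A₂) < 1, let Q ∈ ℝ^{d×d} be symmetric positive definite, and let P₁, P₂ be symmetric positive semidefinite matrices satisfying the discrete Lyapunov equations P₁ = A₁ᵀP₁A₁ + Q and P₂ = A₂ᵀP₂A₂ + Q. Then ‖P₁ − P₂‖ ≤ (1/λ_min(Q))·‖P₁‖·‖P₂‖·(2‖A₂‖·‖A₁ − A₂‖ + ‖A₁ − A₂‖²). -/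
/-!
Write `Δ = P₁ - P₂`. Subtracting the two equations gives `Δ = A₁ᵀ Δ A₁ + R` with
`R = A₁ᵀ P₂ A₁ - A₂ᵀ P₂ A₂`, and expanding `A₁ = A₂ + (A₁ - A₂)` bounds
`‖R‖ ≤ ‖P₂‖ (2 ‖A₂‖ ‖A₁ - A₂‖ + ‖A₁ - A₂‖²)`. Unrolling both equations along the orbit
`x_k = A₁ᵏ x`: since `P₁ ⪰ 0` and `Q ⪰ λ_min(Q) I`, the equation for `P₁` gives
`λ_min(Q) ∑ ‖x_k‖² ≤ xᵀ P₁ x`, so the orbit is square summable and the equation for `Δ` sums to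
`xᵀ Δ x = ∑ x_kᵀ R x_k`. Hence `|xᵀ Δ x| ≤ ‖R‖ ‖P₁‖ ‖x‖² / λ_min(Q)`, and for the symmetric `Δ`
the supremum of `|xᵀ Δ x|` over unit vectors is `‖Δ‖`.
-/

open Matrix
open scoped Kronecker

/-- Spectral norm (largest singular value) of a real matrix, realized as the
operator norm of the induced linear map between Euclidean spaces. -/
noncomputable def spNorm {m n : Type*} [Fintype m] [Fintype n] [DecidableEq n]
    (A : Matrix m n ℝ) : ℝ :=
  ‖(Matrix.toEuclideanLin A).toContinuousLinearMap‖

/-- Spectral radius of a real square matrix (computed over ℂ). -/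
noncomputable def spRadius {n : Type*} [Fintype n] [DecidableEq n] (A : Matrix n n ℝ) : ENNReal :=
  spectralRadius ℂ (A.map Complex.ofReal)

/-- Frobenius norm of a real matrix. -/
noncomputable def frobNorm {m n : Type*} [Fintype m] [Fintype n] (A : Matrix m n ℝ) : ℝ :=
  Real.sqrt (∑ i, ∑ j, (A i j) ^ 2)

/-- Smallest eigenvalue of a hermitian (real symmetric) matrix. -/
noncomputable def lamMin {n : Type*} [Fintype n] [DecidableEq n] {Q : Matrix n n ℝ}
    (hQ : Q.IsHermitian) : ℝ := ⨅ i, hQ.eigenvalues i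

open Finset Filter Topology
open scoped RealInnerProductSpace

theorem Function.eq_sum_range_iterate_add {α M : Type*} [AddCommMonoid M] {T : α → α}
    {f g : α → M} (h : ∀ y, f y = g y + f (T y)) (x : α) (m : ℕ) :
    f x = ∑ k ∈ range m, g (T^[k] x) + f (T^[m] x) := by
  induction m with
  | zero => simp
  | succ m ih => rw [ih, h (T^[m] x), sum_range_succ, add_assoc, Function.iterate_succ_apply']

section StarRing

variable {R : Type*}

theorem sub_eq_star_mul_sub_mul_add_of_lyapunov [NonUnitalRing R] [Star R] {A₁ A₂ Q P₁ P₂ : R}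
    (h₁ : P₁ = star A₁ * P₁ * A₁ + Q) (h₂ : P₂ = star A₂ * P₂ * A₂ + Q) :
    P₁ - P₂ = star A₁ * (P₁ - P₂) * A₁ + (star A₁ * P₂ * A₁ - star A₂ * P₂ * A₂) := by
  nth_rewrite 1 [h₁, h₂]
  noncomm_ring

theorem norm_star_mul_mul_sub_star_mul_mul_le [NonUnitalNormedRing R] [StarAddMonoid R]
    [NormedStarGroup R] (A₁ A₂ P : R) :
    ‖star A₁ * P * A₁ - star A₂ * P * A₂‖ ≤
      ‖P‖ * (2 * ‖A₂‖ * ‖A₁ - A₂‖ + ‖A₁ - A₂‖ ^ 2) := by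
  have hsplit : star A₁ * P * A₁ - star A₂ * P * A₂ = star (A₁ - A₂) * P * A₂ +
      star A₂ * P * (A₁ - A₂) + star (A₁ - A₂) * P * (A₁ - A₂) := by
    simp only [star_sub]
    noncomm_ring
  have h (X Y : R) : ‖star X * P * Y‖ ≤ ‖X‖ * ‖P‖ * ‖Y‖ := by
    grw [norm_mul_le, norm_mul_le, norm_star]
  grw [hsplit, norm_add₃_le, h, h, h]
  exact le_of_eq (by ring)

end StarRing

namespace ContinuousLinearMap

variable {E : Type*} [NormedAddCommGroup E] [InnerProductSpace ℝ E]

theorem norm_le_of_abs_inner_le {T : E →L[ℝ] E} (hT : (T : E →ₗ[ℝ] E).IsSymmetric) {C : ℝ}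
    (hC : 0 ≤ C) (h : ∀ x, |⟪x, T x⟫| ≤ C * ‖x‖ ^ 2) : ‖T‖ ≤ C := by
  rw [T.norm_eq_iSup_rayleighQuotient hT]
  refine ciSup_le fun x => ?_
  rcases eq_or_ne x 0 with rfl | hx
  · simpa using hC
  rw [rayleighQuotient, reApplyInnerSelf_apply, RCLike.re_to_real, abs_div, abs_sq,
    div_le_iff₀ (by positivity), real_inner_comm]
  exact h x

theorem abs_inner_apply_self_le (T : E →L[ℝ] E) (x : E) : |⟪x, T x⟫| ≤ ‖T‖ * ‖x‖ ^ 2 := by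
  grw [abs_real_inner_le_norm, le_opNorm]
  exact le_of_eq (by ring)

variable [CompleteSpace E]

theorem inner_star_mul_mul_apply (A X : E →L[ℝ] E) (x : E) :
    ⟪x, (star A * X * A) x⟫ = ⟪A x, X (A x)⟫ := by
  rw [star_eq_adjoint, mul_apply_eq_comp, mul_apply_eq_comp, adjoint_inner_right]

variable {A X R P Q : E →L[ℝ] E}

theorem inner_eq_sum_range_add_of_lyapunov (hX : X = star A * X * A + R) (x : E) (m : ℕ) :
    ⟪x, X x⟫ = ∑ k ∈ range m, ⟪(A ^ k) x, R ((A ^ k) x)⟫ + ⟪(A ^ m) x, X ((A ^ m) x)⟫ := by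
  simp only [pow_apply_eq_iterate]
  refine Function.eq_sum_range_iterate_add (f := fun y => ⟪y, X y⟫)
    (g := fun y => ⟪y, R y⟫) (fun y => ?_) x m
  conv_lhs => rw [hX]
  rw [_root_.add_apply, inner_add_right, inner_star_mul_mul_apply, add_comm]

theorem mul_sum_range_norm_sq_pow_apply_le_of_lyapunov (hP : ∀ y, 0 ≤ ⟪y, P y⟫) {c : ℝ}
    (hQ : ∀ y, c * ‖y‖ ^ 2 ≤ ⟪y, Q y⟫) (hPQ : P = star A * P * A + Q) (x : E) (m : ℕ) :
    c * ∑ k ∈ range m, ‖(A ^ k) x‖ ^ 2 ≤ ⟪x, P x⟫ := by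
  rw [inner_eq_sum_range_add_of_lyapunov hPQ x m, mul_sum]
  exact le_add_of_le_of_nonneg (sum_le_sum fun k _ => hQ _) (hP _)

theorem summable_norm_sq_pow_apply_of_lyapunov (hP : ∀ y, 0 ≤ ⟪y, P y⟫) {c : ℝ} (hc : 0 < c)
    (hQ : ∀ y, c * ‖y‖ ^ 2 ≤ ⟪y, Q y⟫) (hPQ : P = star A * P * A + Q) (x : E) :
    Summable fun k => ‖(A ^ k) x‖ ^ 2 :=
  summable_of_sum_range_le (fun _ => sq_nonneg _) fun m =>
    (le_div_iff₀' hc).2 (mul_sum_range_norm_sq_pow_apply_le_of_lyapunov hP hQ hPQ x m)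

theorem mul_tsum_norm_sq_pow_apply_le_of_lyapunov (hP : ∀ y, 0 ≤ ⟪y, P y⟫) {c : ℝ} (hc : 0 < c)
    (hQ : ∀ y, c * ‖y‖ ^ 2 ≤ ⟪y, Q y⟫) (hPQ : P = star A * P * A + Q) (x : E) :
    c * ∑' k, ‖(A ^ k) x‖ ^ 2 ≤ ⟪x, P x⟫ :=
  (le_div_iff₀' hc).1 <|
    (summable_norm_sq_pow_apply_of_lyapunov hP hc hQ hPQ x).tsum_le_of_sum_range_le fun m =>
      (le_div_iff₀' hc).2 (mul_sum_range_norm_sq_pow_apply_le_of_lyapunov hP hQ hPQ x m)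

theorem hasSum_inner_pow_apply_of_lyapunov (hX : X = star A * X * A + R) {x : E}
    (hx : Summable fun k => ‖(A ^ k) x‖ ^ 2) :
    HasSum (fun k => ⟪(A ^ k) x, R ((A ^ k) x)⟫) ⟪x, X x⟫ := by
  have hR : Summable fun k => ⟪(A ^ k) x, R ((A ^ k) x)⟫ :=
    (hx.mul_left ‖R‖).of_norm_bounded fun k => abs_inner_apply_self_le R _
  have htail : Tendsto (fun m => ⟪(A ^ m) x, X ((A ^ m) x)⟫) atTop (𝓝 0) :=
    squeeze_zero_norm (fun m => abs_inner_apply_self_le X _) <| by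
      simpa using hx.tendsto_atTop_zero.const_mul ‖X‖
  rw [hR.hasSum_iff_tendsto_nat]
  have := (tendsto_const_nhds (x := ⟪x, X x⟫)).sub htail
  rw [sub_zero] at this
  refine this.congr fun m => ?_
  rw [inner_eq_sum_range_add_of_lyapunov hX x m, add_sub_cancel_right]

theorem mul_abs_inner_le_of_lyapunov (hP : ∀ y, 0 ≤ ⟪y, P y⟫) {c : ℝ} (hc : 0 < c)
    (hQ : ∀ y, c * ‖y‖ ^ 2 ≤ ⟪y, Q y⟫) (hPQ : P = star A * P * A + Q)
    (hX : X = star A * X * A + R) (x : E) :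
    c * |⟪x, X x⟫| ≤ ‖R‖ * ⟪x, P x⟫ := by
  have hx := summable_norm_sq_pow_apply_of_lyapunov hP hc hQ hPQ x
  have hsum : |⟪x, X x⟫| ≤ ‖R‖ * ∑' k, ‖(A ^ k) x‖ ^ 2 :=
    (hasSum_inner_pow_apply_of_lyapunov hX hx).norm_le_of_bounded (hx.hasSum.mul_left ‖R‖)
      fun k => abs_inner_apply_self_le R _
  calc c * |⟪x, X x⟫| ≤ ‖R‖ * (c * ∑' k, ‖(A ^ k) x‖ ^ 2) := by
        grw [hsum]; exact le_of_eq (by ring)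
    _ ≤ ‖R‖ * ⟪x, P x⟫ := by
        grw [mul_tsum_norm_sq_pow_apply_le_of_lyapunov hP hc hQ hPQ x]

theorem norm_le_of_lyapunov (hXs : IsSelfAdjoint X) (hP : ∀ y, 0 ≤ ⟪y, P y⟫)
    {c : ℝ} (hc : 0 < c) (hQ : ∀ y, c * ‖y‖ ^ 2 ≤ ⟪y, Q y⟫) (hPQ : P = star A * P * A + Q)
    (hX : X = star A * X * A + R) :
    ‖X‖ ≤ ‖P‖ * ‖R‖ / c := by
  refine norm_le_of_abs_inner_le hXs.isSymmetric (by positivity) fun x => ?_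
  rw [div_mul_eq_mul_div, le_div_iff₀' hc]
  calc c * |⟪x, X x⟫| ≤ ‖R‖ * ⟪x, P x⟫ := mul_abs_inner_le_of_lyapunov hP hc hQ hPQ hX x
    _ ≤ ‖R‖ * (‖P‖ * ‖x‖ ^ 2) := by grw [(le_abs_self _).trans (abs_inner_apply_self_le P x)]
    _ = ‖P‖ * ‖R‖ * ‖x‖ ^ 2 := by ring

theorem norm_sub_le_of_lyapunov {A₁ A₂ P₁ P₂ : E →L[ℝ] E} (hP₁s : IsSelfAdjoint P₁)
    (hP₂s : IsSelfAdjoint P₂) (hP₁ : ∀ y, 0 ≤ ⟪y, P₁ y⟫) {c : ℝ} (hc : 0 < c)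
    (hQ : ∀ y, c * ‖y‖ ^ 2 ≤ ⟪y, Q y⟫) (h₁ : P₁ = star A₁ * P₁ * A₁ + Q)
    (h₂ : P₂ = star A₂ * P₂ * A₂ + Q) :
    ‖P₁ - P₂‖ ≤ ‖P₁‖ * ‖P₂‖ * (2 * ‖A₂‖ * ‖A₁ - A₂‖ + ‖A₁ - A₂‖ ^ 2) / c := by
  grw [norm_le_of_lyapunov (hP₁s.sub hP₂s) hP₁ hc hQ h₁
    (sub_eq_star_mul_sub_mul_add_of_lyapunov h₁ h₂),
    norm_star_mul_mul_sub_star_mul_mul_le A₁ A₂ P₂]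
  exact le_of_eq (by ring)

end ContinuousLinearMap

section Matrix

open scoped MatrixOrder

variable {n : Type*} [Fintype n] [DecidableEq n]

theorem spNorm_eq_norm_toEuclideanCLM (M : Matrix n n ℝ) :
    spNorm M = ‖toEuclideanCLM (𝕜 := ℝ) M‖ :=
  rfl

theorem lamMin_pos [Nonempty n] {Q : Matrix n n ℝ} (hQ : Q.PosDef) : 0 < lamMin hQ.1 := by
  obtain ⟨i, hi⟩ := exists_eq_ciInf_of_finite (f := hQ.1.eigenvalues)
  rw [lamMin, ← hi]
  exact hQ.eigenvalues_pos i

theorem algebraMap_lamMin_le {Q : Matrix n n ℝ} (hQ : Q.IsHermitian) :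
    algebraMap ℝ (Matrix n n ℝ) (lamMin hQ) ≤ Q := by
  rw [algebraMap_le_iff_le_spectrum hQ.isSelfAdjoint, hQ.spectrum_real_eq_range_eigenvalues]
  rintro _ ⟨i, rfl⟩
  exact ciInf_le (Set.finite_range _).bddBelow i

theorem inner_toEuclideanCLM_self_nonneg {M : Matrix n n ℝ} (hM : M.PosSemidef)
    (x : EuclideanSpace ℝ n) : 0 ≤ ⟪x, toEuclideanCLM (𝕜 := ℝ) M x⟫ :=
  (isPositive_toEuclideanLin_iff.2 hM).inner_nonneg_right x

theorem lamMin_mul_norm_sq_le_inner {Q : Matrix n n ℝ} (hQ : Q.IsHermitian)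
    (x : EuclideanSpace ℝ n) : lamMin hQ * ‖x‖ ^ 2 ≤ ⟪x, toEuclideanCLM (𝕜 := ℝ) Q x⟫ := by
  have h := inner_toEuclideanCLM_self_nonneg (le_iff.1 (algebraMap_lamMin_le hQ)) x
  rw [map_sub, AlgEquivClass.commutes, Algebra.algebraMap_eq_smul_one] at h
  simp only [_root_.sub_apply, _root_.smul_apply, one_apply_eq_self, inner_sub_right,
    real_inner_smul_right, real_inner_self_eq_norm_sq] at h
  linarith

theorem toEuclideanCLM_eq_star_mul_mul_add {A Q P : Matrix n n ℝ} (h : P = Aᵀ * P * A + Q) :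
    toEuclideanCLM (𝕜 := ℝ) P =
      star (toEuclideanCLM (𝕜 := ℝ) A) * toEuclideanCLM (𝕜 := ℝ) P * toEuclideanCLM (𝕜 := ℝ) A +
        toEuclideanCLM (𝕜 := ℝ) Q := by
  conv_lhs => rw [h]
  rw [← conjTranspose_eq_transpose_of_trivial, ← star_eq_conjTranspose, map_add, map_mul, map_mul,
    map_star]

end Matrix

theorem lyapunov_perturbation_general {d : ℕ} (A₁ A₂ Q P₁ P₂ : Matrix (Fin d) (Fin d) ℝ)
    (hQ : Q.PosDef)
    (hP₁ : P₁.PosSemidef) (hP₂ : P₂.PosSemidef)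
    (hL₁ : P₁ = A₁ᵀ * P₁ * A₁ + Q) (hL₂ : P₂ = A₂ᵀ * P₂ * A₂ + Q) :
    spNorm (P₁ - P₂) ≤ (1 / lamMin hQ.1) * spNorm P₁ * spNorm P₂ *
      (2 * spNorm A₂ * spNorm (A₁ - A₂) + spNorm (A₁ - A₂) ^ 2) := by
  -- for `d = 0`, `lamMin` is the junk value `0`, but both sides vanish
  rcases isEmpty_or_nonempty (Fin d) with _ | _
  · simp [spNorm, Subsingleton.elim (P₁ - P₂) 0]
  simp only [spNorm_eq_norm_toEuclideanCLM, map_sub]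
  refine (ContinuousLinearMap.norm_sub_le_of_lyapunov (hP₁.1.isSelfAdjoint.map _)
    (hP₂.1.isSelfAdjoint.map _) (inner_toEuclideanCLM_self_nonneg hP₁) (lamMin_pos hQ)
    (lamMin_mul_norm_sq_le_inner hQ.1) (toEuclideanCLM_eq_star_mul_mul_add hL₁)
    (toEuclideanCLM_eq_star_mul_mul_add hL₂)).trans_eq ?_
  ring

/-- Lyapunov perturbation bound (Lemma: Lyapunov Perturbation). -/
theorem lyapunov_perturbation {d : ℕ} (A₁ A₂ Q P₁ P₂ : Matrix (Fin d) (Fin d) ℝ)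
    (hA₁ : spRadius A₁ < 1) (hA₂ : spRadius A₂ < 1)
    (hQ : Q.PosDef)
    (hP₁ : P₁.PosSemidef) (hP₂ : P₂.PosSemidef)
    (hL₁ : P₁ = A₁ᵀ * P₁ * A₁ + Q) (hL₂ : P₂ = A₂ᵀ * P₂ * A₂ + Q) :
    spNorm (P₁ - P₂) ≤ (1 / lamMin hQ.1) * spNorm P₁ * spNorm P₂ *
      (2 * spNorm A₂ * spNorm (A₁ - A₂) + spNorm (A₁ - A₂) ^ 2) :=
  lyapunov_perturbation_general A₁ A₂ Q P₁ P₂ hQ hP₁ hP₂ hL₁ hL₂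
end

section
/- Let A ∈ ℝ^{n×n}, B ∈ ℝ^{n×m}, and let K₁, K₂ ∈ ℝ^{m×n} be gains with ρ(A + BK₁) < 1 and ρ(A + BK₂) < 1, and let Σ₁, Σ₂ be the positive semidefinite matrices satisfying Σᵢ = (A + BKᵢ)Σᵢ(A + BKᵢ)ᵀ + I for i = 1, 2. If ‖B(K₁ − K₂)‖ ≤ 1/(12·‖Σ₁‖^{5/2}), then Σ₂ ⪰ (1/2)·Σ₁. -/
/-!
Write `Lᵢ = A + B Kᵢ`, `Δ = L₁ - L₂` and `C = Δ Σ₁ L₁ᵀ`. Subtracting the two Lyapunov equations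
shows that `Y = Σ₂ - ½ Σ₁` solves `Y = L₂ Y L₂ᵀ + ½ (I - C - Cᵀ + Δ Σ₁ Δᵀ)`. From `Σ₁ ⪰ I` and
`L₁ Σ₁ L₁ᵀ ⪯ Σ₁` one gets `1 ≤ ‖Σ₁‖` and `‖L₁‖ ≤ ‖Σ₁‖^{1/2}`, so `‖C‖ ≤ ‖Δ‖ ‖Σ₁‖^{3/2} ≤ 1/2`
and the forcing term is positive semidefinite. Since `ρ(L₂) < 1`, Gelfand's formula gives
`L₂ᴺ → 0`, so `Y` is the limit of the positive semidefinite matrices `Y - L₂ᴺ Y (L₂ᴺ)ᵀ`.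
-/

open Matrix
open scoped Kronecker

open Filter Topology

theorem tendsto_pow_atTop_nhds_zero_of_spectralRadius_lt_one {A : Type*} [NormedRing A]
    [NormedAlgebra ℂ A] [CompleteSpace A] {a : A} (ha : spectralRadius ℂ a < 1) :
    Tendsto (a ^ ·) atTop (𝓝 0) := by
  obtain ⟨r, hρr, hr1⟩ := ENNReal.lt_iff_exists_nnreal_btwn.mp ha
  have hbound : ∀ᶠ N : ℕ in atTop, ‖a ^ N‖₊ ≤ r ^ N := by
    have hgelfand := spectrum.pow_nnnorm_pow_one_div_tendsto_nhds_spectralRadius a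
    filter_upwards [hgelfand.eventually_lt_const hρr, eventually_gt_atTop 0] with N hN hN_pos
    rw [← ENNReal.coe_rpow_of_nonneg _ (by positivity), ENNReal.coe_lt_coe, one_div,
      NNReal.rpow_inv_lt_iff (by positivity), NNReal.rpow_natCast] at hN
    exact hN.le
  rw [tendsto_zero_iff_norm_tendsto_zero]
  exact squeeze_zero' (.of_forall fun _ ↦ norm_nonneg _) hbound
    (by exact_mod_cast tendsto_pow_atTop_nhds_zero_of_lt_one r.2 (by exact_mod_cast hr1))

theorem mul_mul_sqrt_le_half {ε s : ℝ} (hs : 1 ≤ s) (hε : ε ≤ 1 / (12 * s ^ ((5 : ℝ) / 2))) :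
    ε * s * √s ≤ 1 / 2 := by
  have h52 : s ^ ((5 : ℝ) / 2) = s ^ 2 * √s := by
    rw [Real.sqrt_eq_rpow, ← Real.rpow_natCast, ← Real.rpow_add (by linarith)]
    norm_num
  have hsqrt : 1 ≤ √s := Real.one_le_sqrt.mpr hs
  rw [h52, le_div_iff₀ (by positivity)] at hε
  nlinarith

theorem EuclideanSpace.sq_norm_toLp_eq_dotProduct {ι : Type*} [Fintype ι] (x : ι → ℝ) :
    ‖WithLp.toLp 2 x‖ ^ 2 = x ⬝ᵥ x := by
  rw [← real_inner_self_eq_norm_sq, EuclideanSpace.inner_toLp_toLp, star_trivial]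

namespace Matrix

open scoped Matrix.Norms.L2Operator

variable {ι : Type*} [Fintype ι]

theorem isClosed_setOf_posSemidef : IsClosed {M : Matrix ι ι ℝ | M.PosSemidef} := by
  simp only [posSemidef_iff_dotProduct_mulVec, Set.ofPred_and, Set.ofPred_forall]
  exact .inter (isClosed_eq continuous_id.matrix_conjTranspose continuous_id)
    (isClosed_iInter fun x ↦ isClosed_le continuous_const (by fun_prop))

variable [DecidableEq ι]

theorem tendsto_pow_atTop_nhds_zero_of_spRadius_lt_one {L : Matrix ι ι ℝ}
    (hL : spRadius L < 1) : Tendsto (L ^ ·) atTop (𝓝 0) := by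
  have hre : Continuous fun M : Matrix ι ι ℂ ↦ M.map Complex.re :=
    continuous_id.matrix_map Complex.continuous_re
  convert (hre.tendsto 0).comp (tendsto_pow_atTop_nhds_zero_of_spectralRadius_lt_one hL) using 1
  · ext N : 1
    change _ = ((L.map Complex.ofRealHom) ^ N).map _
    rw [← Matrix.map_pow, Matrix.map_map]
    ext
    simp
  · simp

theorem PosSemidef.of_eq_mul_mul_transpose_add {L X M : Matrix ι ι ℝ} (hL : spRadius L < 1)
    (hM : M.PosSemidef) (hX : X = L * X * Lᵀ + M) : X.PosSemidef := by
  have hpartial (N : ℕ) : (X - L ^ N * X * (L ^ N)ᵀ).PosSemidef := by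
    induction N with
    | zero => simpa using PosSemidef.zero
    | succ N ih =>
      have hstep : X - L ^ (N + 1) * X * (L ^ (N + 1))ᵀ =
          M + L * (X - L ^ N * X * (L ^ N)ᵀ) * Lᵀ := by
        rw [pow_succ', transpose_mul]
        nth_rw 1 [hX]
        noncomm_ring
      rw [hstep, ← conjTranspose_eq_transpose_of_trivial]
      exact hM.add (ih.mul_mul_conjTranspose_same L)
  have hlim : Tendsto (fun N ↦ X - L ^ N * X * (L ^ N)ᵀ) atTop (𝓝 X) := by
    have hcont : Continuous fun P : Matrix ι ι ℝ ↦ X - P * X * Pᵀ := by fun_prop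
    simpa [Function.comp_def] using
      (hcont.tendsto 0).comp (tendsto_pow_atTop_nhds_zero_of_spRadius_lt_one hL)
  exact isClosed_setOf_posSemidef.mem_of_tendsto hlim (.of_forall hpartial)

theorem dotProduct_mulVec_le_l2_opNorm_mul (A : Matrix ι ι ℝ) (x : ι → ℝ) :
    x ⬝ᵥ A *ᵥ x ≤ ‖A‖ * (x ⬝ᵥ x) := by
  calc x ⬝ᵥ A *ᵥ x = inner ℝ (WithLp.toLp 2 (A *ᵥ x)) (WithLp.toLp 2 x) := by
        rw [EuclideanSpace.inner_toLp_toLp, star_trivial]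
    _ ≤ ‖WithLp.toLp 2 (A *ᵥ x)‖ * ‖WithLp.toLp 2 x‖ := real_inner_le_norm _ _
    _ ≤ ‖A‖ * ‖WithLp.toLp 2 x‖ * ‖WithLp.toLp 2 x‖ := by
        gcongr
        exact A.l2_opNorm_mulVec (WithLp.toLp 2 x)
    _ = ‖A‖ * (x ⬝ᵥ x) := by
        rw [mul_assoc, ← sq, EuclideanSpace.sq_norm_toLp_eq_dotProduct]

theorem posSemidef_one_sub_sub_transpose {C : Matrix ι ι ℝ} (hC : ‖C‖ ≤ 1 / 2) :
    (1 - C - Cᵀ).PosSemidef := by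
  refine .of_dotProduct_mulVec_nonneg ?_ fun x ↦ ?_
  · rw [IsHermitian, conjTranspose_eq_transpose_of_trivial, transpose_sub, transpose_sub,
      transpose_one, transpose_transpose, sub_right_comm]
  · have hC_quad := dotProduct_mulVec_le_l2_opNorm_mul C x
    have hCT_quad : x ⬝ᵥ Cᵀ *ᵥ x = x ⬝ᵥ C *ᵥ x := by
      rw [mulVec_transpose, dotProduct_comm, dotProduct_mulVec]
    have hx : 0 ≤ x ⬝ᵥ x := by simpa using dotProduct_star_self_nonneg x
    rw [star_trivial, sub_mulVec, sub_mulVec, one_mulVec, dotProduct_sub, dotProduct_sub,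
      hCT_quad]
    nlinarith

theorem posSemidef_sub_one_of_eq_mul_mul_transpose_add_one {L S : Matrix ι ι ℝ}
    (hS : S.PosSemidef) (hE : S = L * S * Lᵀ + 1) : (S - 1).PosSemidef := by
  rw [hE, add_sub_cancel_right, ← conjTranspose_eq_transpose_of_trivial]
  exact hS.mul_mul_conjTranspose_same L

theorem one_le_l2_opNorm_of_posSemidef_sub_one [Nonempty ι] {S : Matrix ι ι ℝ}
    (hS : (S - 1).PosSemidef) : 1 ≤ ‖S‖ := by
  set x : ι → ℝ := fun _ ↦ 1
  have hx : 0 < x ⬝ᵥ x := by simp [x, dotProduct, Fintype.card_pos]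
  have hq : x ⬝ᵥ x ≤ x ⬝ᵥ S *ᵥ x := by
    have := hS.dotProduct_mulVec_nonneg x
    rwa [star_trivial, sub_mulVec, one_mulVec, dotProduct_sub, sub_nonneg] at this
  exact le_of_mul_le_mul_right (by linarith [dotProduct_mulVec_le_l2_opNorm_mul S x]) hx

theorem l2_opNorm_le_sqrt_of_eq_mul_mul_transpose_add_one {L S : Matrix ι ι ℝ}
    (hS : S.PosSemidef) (hE : S = L * S * Lᵀ + 1) : ‖L‖ ≤ √‖S‖ := by
  have hS1 := posSemidef_sub_one_of_eq_mul_mul_transpose_add_one hS hE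
  have hquad (x : ι → ℝ) :
      ‖WithLp.toLp 2 (Lᵀ *ᵥ x)‖ ^ 2 ≤ ‖S‖ * ‖WithLp.toLp 2 x‖ ^ 2 := by
    rw [EuclideanSpace.sq_norm_toLp_eq_dotProduct, EuclideanSpace.sq_norm_toLp_eq_dotProduct]
    have hLx := hS1.dotProduct_mulVec_nonneg (Lᵀ *ᵥ x)
    have hSx := dotProduct_mulVec_le_l2_opNorm_mul S x
    have hx : 0 ≤ x ⬝ᵥ x := by simpa using dotProduct_star_self_nonneg x
    rw [star_trivial, sub_mulVec, one_mulVec, dotProduct_sub, sub_nonneg] at hLx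
    have hconj : (Lᵀ *ᵥ x) ⬝ᵥ S *ᵥ (Lᵀ *ᵥ x) = x ⬝ᵥ S *ᵥ x - x ⬝ᵥ x := by
      conv_rhs => rw [hE]
      rw [add_mulVec, one_mulVec, dotProduct_add, add_sub_cancel_right, ← mulVec_mulVec,
        ← mulVec_mulVec, dotProduct_mulVec x L, ← mulVec_transpose]
    linarith
  rw [← l2_opNorm_conjTranspose, conjTranspose_eq_transpose_of_trivial]
  refine ContinuousLinearMap.opNorm_le_bound _ (Real.sqrt_nonneg _) fun x ↦ ?_
  refine (pow_le_pow_iff_left₀ (norm_nonneg _) (by positivity) two_ne_zero).mp ?_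
  rw [mul_pow, Real.sq_sqrt (norm_nonneg _)]
  exact hquad x.ofLp

theorem sub_half_smul_eq_mul_mul_transpose_add {L₁ L₂ S₁ S₂ : Matrix ι ι ℝ} (hS₁ : S₁ᵀ = S₁)
    (hE₁ : S₁ = L₁ * S₁ * L₁ᵀ + 1) (hE₂ : S₂ = L₂ * S₂ * L₂ᵀ + 1) :
    S₂ - (1 / 2 : ℝ) • S₁ = L₂ * (S₂ - (1 / 2 : ℝ) • S₁) * L₂ᵀ + (1 / 2 : ℝ) •
      (1 - (L₁ - L₂) * S₁ * L₁ᵀ - ((L₁ - L₂) * S₁ * L₁ᵀ)ᵀ + (L₁ - L₂) * S₁ * (L₁ - L₂)ᵀ) := by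
  simp only [transpose_mul, transpose_sub, transpose_transpose, hS₁, mul_sub, sub_mul,
    mul_smul_comm, smul_mul_assoc, Matrix.mul_assoc] at hE₁ hE₂ ⊢
  linear_combination (norm := module) hE₂ - (1 / 2 : ℝ) • hE₁

end Matrix

open scoped Matrix.Norms.L2Operator

theorem cov_lower_bound_general {n m : ℕ} (A : Matrix (Fin n) (Fin n) ℝ) (B : Matrix (Fin n) (Fin m) ℝ)
    (K₁ K₂ : Matrix (Fin m) (Fin n) ℝ) (S₁ S₂ : Matrix (Fin n) (Fin n) ℝ)
    (h₂ : spRadius (A + B * K₂) < 1)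
    (hS₁ : S₁.PosSemidef)
    (hE₁ : S₁ = (A + B * K₁) * S₁ * (A + B * K₁)ᵀ + 1)
    (hE₂ : S₂ = (A + B * K₂) * S₂ * (A + B * K₂)ᵀ + 1)
    (hB : spNorm (B * (K₁ - K₂)) ≤ 1 / (12 * spNorm S₁ ^ ((5 : ℝ) / 2))) :
    (S₂ - (1 / 2 : ℝ) • S₁).PosSemidef := by
  rcases isEmpty_or_nonempty (Fin n) with _ | _
  · rw [Subsingleton.elim (S₂ - (1 / 2 : ℝ) • S₁) 0]
    exact PosSemidef.zero
  set L₁ := A + B * K₁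
  set L₂ := A + B * K₂
  have hΔ : B * (K₁ - K₂) = L₁ - L₂ := by
    simp only [L₁, L₂, Matrix.mul_sub, add_sub_add_left_eq_sub]
  have hs : 1 ≤ ‖S₁‖ := one_le_l2_opNorm_of_posSemidef_sub_one
    (posSemidef_sub_one_of_eq_mul_mul_transpose_add_one hS₁ hE₁)
  have hC : ‖(L₁ - L₂) * S₁ * L₁ᵀ‖ ≤ 1 / 2 :=
    calc ‖(L₁ - L₂) * S₁ * L₁ᵀ‖ ≤ ‖L₁ - L₂‖ * ‖S₁‖ * ‖L₁‖ := by
          grw [l2_opNorm_mul, l2_opNorm_mul, ← conjTranspose_eq_transpose_of_trivial,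
            l2_opNorm_conjTranspose]
      _ ≤ ‖L₁ - L₂‖ * ‖S₁‖ * √‖S₁‖ := by
          grw [l2_opNorm_le_sqrt_of_eq_mul_mul_transpose_add_one hS₁ hE₁]
      -- `spNorm` is the L2 operator norm by definition
      _ ≤ 1 / 2 := mul_mul_sqrt_le_half hs (hΔ ▸ hB)
  refine PosSemidef.of_eq_mul_mul_transpose_add h₂ ?_
    (sub_half_smul_eq_mul_mul_transpose_add (isHermitian_iff_isSymm.mp hS₁.1).eq hE₁ hE₂)
  refine ((posSemidef_one_sub_sub_transpose hC).add ?_).smul (by norm_num)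
  rw [← conjTranspose_eq_transpose_of_trivial]
  exact hS₁.mul_mul_conjTranspose_same _

/-- Covariance lower bound under gain perturbation. -/
theorem cov_lower_bound {n m : ℕ} (A : Matrix (Fin n) (Fin n) ℝ) (B : Matrix (Fin n) (Fin m) ℝ)
    (K₁ K₂ : Matrix (Fin m) (Fin n) ℝ) (S₁ S₂ : Matrix (Fin n) (Fin n) ℝ)
    (h₁ : spRadius (A + B * K₁) < 1) (h₂ : spRadius (A + B * K₂) < 1)
    (hS₁ : S₁.PosSemidef) (hS₂ : S₂.PosSemidef)
    (hE₁ : S₁ = (A + B * K₁) * S₁ * (A + B * K₁)ᵀ + 1)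
    (hE₂ : S₂ = (A + B * K₂) * S₂ * (A + B * K₂)ᵀ + 1)
    (hB : spNorm (B * (K₁ - K₂)) ≤ 1 / (12 * spNorm S₁ ^ ((5 : ℝ) / 2))) :
    (S₂ - (1 / 2 : ℝ) • S₁).PosSemidef :=
  cov_lower_bound_general A B K₁ K₂ S₁ S₂ h₂ hS₁ hE₁ hE₂ hB
end

section
/- Let (A₁, B₁) and (A₂, B₂) be two systems with A₁, A₂ ∈ ℝ^{n×n} and B₁, B₂ ∈ ℝ^{n×m}, both with state-cost matrix Q symmetric with Q ⪰ I and input cost R = I. Let P₁, P₂ be DARE solutions for (A₁, B₁, Q, I) and (A₂, B₂, Q, I), let Ψᵢ = BᵢᵀPᵢBᵢ + I, and let τ₁ = max(‖B₁‖, 1). If δ := ‖[A₁ − A₂, B₁ − B₂]‖_F ≤ (1/16)·‖P₁‖^{−2}, then ‖Ψ₂ − Ψ₁‖ ≤ 15·τ₁²·‖P₁‖³·δ. -/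
open Matrix
open scoped Kronecker

/-!
A DARE solution `P` is a value function: `x ⬝ᵥ P *ᵥ x` is the optimal cost, attained by the gain
`K⋆ = -Ψ⁻¹ Bᵀ P A`, and completing the square shows that any other gain `K` costs an extra
`(K - K⋆)ᵀ Ψ (K - K⋆)`. Feeding the optimal gain of one system into the other yields a one-step
inequality `P' - P ≼ Nᵀ (P' - P) N + ε I`, where the closed loop `N` strictly decreases a
quadratic Lyapunov function (because `Q ⪰ I`) and `ε = O(δ ‖P₁‖²)` measures how far the closed loop
moves. Iterating along the decaying orbit of `N` gives `P' - P ≼ O(ε) P`. The gain of system 1 bounds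
`P₂ - P₁` from above, which also bounds `P₂`; the gain of system 2 then bounds `P₁ - P₂`. Hence
`‖P₂ - P₁‖ = O(δ ‖P₁‖³)`, and `Ψ₂ - Ψ₁ = B₂ᵀ (P₂ - P₁) B₂ + (B₂ᵀ P₁ B₂ - B₁ᵀ P₁ B₁)`.
-/

open scoped Matrix.Norms.L2Operator
open WithLp Filter Topology

lemma spNorm_eq_norm {m n : Type*} [Fintype m] [Fintype n] [DecidableEq n] (A : Matrix m n ℝ) :
    spNorm A = ‖A‖ :=
  rfl

namespace Matrix

variable {ι κ : Type*} [Fintype ι] [Fintype κ]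

lemma dotProduct_self_eq_norm_sq (x : ι → ℝ) : x ⬝ᵥ x = ‖toLp 2 x‖ ^ 2 := by
  rw [← real_inner_self_eq_norm_sq, EuclideanSpace.inner_toLp_toLp]; rfl

lemma dotProduct_self_nonneg (x : ι → ℝ) : 0 ≤ x ⬝ᵥ x := by
  rw [dotProduct_self_eq_norm_sq]; positivity

lemma dotProduct_transpose_mul_mul_mulVec (L : Matrix ι κ ℝ) (M : Matrix ι ι ℝ) (x : κ → ℝ) :
    x ⬝ᵥ (Lᵀ * M * L) *ᵥ x = (L *ᵥ x) ⬝ᵥ M *ᵥ (L *ᵥ x) := by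
  rw [← mulVec_mulVec, ← mulVec_mulVec, dotProduct_mulVec, vecMul_transpose]

lemma dotProduct_transpose_mul_mulVec (L : Matrix ι κ ℝ) (x : κ → ℝ) :
    x ⬝ᵥ (Lᵀ * L) *ᵥ x = (L *ᵥ x) ⬝ᵥ (L *ᵥ x) := by
  rw [← mulVec_mulVec, dotProduct_mulVec, vecMul_transpose]

lemma PosSemidef.dotProduct_mulVec_nonneg_real {M : Matrix ι ι ℝ} (hM : M.PosSemidef)
    (x : ι → ℝ) : 0 ≤ x ⬝ᵥ M *ᵥ x := by
  simpa using hM.dotProduct_mulVec_nonneg x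

lemma dotProduct_self_le_of_posSemidef_sub_one [DecidableEq ι] {Q : Matrix ι ι ℝ}
    (hQ : (Q - 1).PosSemidef) (x : ι → ℝ) : x ⬝ᵥ x ≤ x ⬝ᵥ Q *ᵥ x := by
  have := hQ.dotProduct_mulVec_nonneg_real x
  rwa [sub_mulVec, one_mulVec, dotProduct_sub, sub_nonneg] at this

lemma abs_dotProduct_mulVec_le [DecidableEq ι] (M : Matrix ι ι ℝ) (x : ι → ℝ) :
    |x ⬝ᵥ M *ᵥ x| ≤ ‖M‖ * (x ⬝ᵥ x) := by
  rw [← inner_toEuclideanCLM M (toLp 2 x) (toLp 2 x), dotProduct_self_eq_norm_sq, cstar_norm_def]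
  calc _ ≤ ‖toLp 2 x‖ * ‖toEuclideanCLM (𝕜 := ℝ) M (toLp 2 x)‖ := abs_real_inner_le_norm _ _
    _ ≤ ‖toLp 2 x‖ * (‖toEuclideanCLM (𝕜 := ℝ) M‖ * ‖toLp 2 x‖) := by
      gcongr; exact ContinuousLinearMap.le_opNorm _ _
    _ = _ := by ring

lemma dotProduct_mulVec_le_norm_mul [DecidableEq ι] (M : Matrix ι ι ℝ) (x : ι → ℝ) :
    x ⬝ᵥ M *ᵥ x ≤ ‖M‖ * (x ⬝ᵥ x) :=
  (le_abs_self _).trans (abs_dotProduct_mulVec_le _ _)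

lemma norm_le_of_abs_dotProduct_mulVec_le [DecidableEq ι] {M : Matrix ι ι ℝ} (hM : M.IsHermitian)
    {c : ℝ} (hc : 0 ≤ c) (h : ∀ x, |x ⬝ᵥ M *ᵥ x| ≤ c * (x ⬝ᵥ x)) : ‖M‖ ≤ c := by
  have hT : (toEuclideanCLM (𝕜 := ℝ) M).IsSymmetric := isSymmetric_toEuclideanLin_iff.mpr hM
  rw [cstar_norm_def, ContinuousLinearMap.norm_eq_iSup_rayleighQuotient _ hT]
  refine ciSup_le fun x => ?_
  have hx := h (ofLp x)
  rw [← inner_toEuclideanCLM, dotProduct_self_eq_norm_sq, real_inner_comm] at hx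
  simp only [ContinuousLinearMap.rayleighQuotient, ContinuousLinearMap.reApplyInnerSelf_apply,
    RCLike.re_to_real, abs_div, abs_sq]
  exact div_le_of_le_mul₀ (sq_nonneg _) hc hx

lemma norm_sq_le_of_mulVec_dotProduct_le [DecidableEq κ] {A : Matrix ι κ ℝ} {c : ℝ} (hc : 0 ≤ c)
    (h : ∀ x, (A *ᵥ x) ⬝ᵥ (A *ᵥ x) ≤ c * (x ⬝ᵥ x)) : ‖A‖ ^ 2 ≤ c := by
  rw [sq, ← l2_opNorm_conjTranspose_mul_self]
  refine norm_le_of_abs_dotProduct_mulVec_le (isHermitian_conjTranspose_mul_self A) hc fun x => ?_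
  rw [conjTranspose_eq_transpose_of_trivial, dotProduct_transpose_mul_mulVec,
    abs_of_nonneg (dotProduct_self_nonneg _)]
  exact h x

lemma one_le_norm_of_dotProduct_self_le [DecidableEq ι] [Nonempty ι] {P : Matrix ι ι ℝ}
    (h : ∀ x, x ⬝ᵥ x ≤ x ⬝ᵥ P *ᵥ x) : 1 ≤ ‖P‖ := by
  obtain ⟨i⟩ := ‹Nonempty ι›
  have hx : Pi.single i 1 ⬝ᵥ Pi.single i 1 = (1 : ℝ) := by simp
  have := (h (Pi.single i 1)).trans (dotProduct_mulVec_le_norm_mul _ _)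
  rwa [hx, mul_one] at this

lemma frobNorm_nonneg (A : Matrix ι κ ℝ) : 0 ≤ frobNorm A := Real.sqrt_nonneg _

lemma frobNorm_sq (A : Matrix ι κ ℝ) : frobNorm A ^ 2 = ∑ i, ∑ j, A i j ^ 2 :=
  Real.sq_sqrt (by positivity)

lemma norm_le_frobNorm [DecidableEq κ] (A : Matrix ι κ ℝ) : ‖A‖ ≤ frobNorm A := by
  rw [← sq_le_sq₀ (norm_nonneg A) (frobNorm_nonneg A), frobNorm_sq]
  refine norm_sq_le_of_mulVec_dotProduct_le (by positivity) fun x => ?_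
  calc (A *ᵥ x) ⬝ᵥ (A *ᵥ x) = ∑ i, (∑ j, A i j * x j) ^ 2 := by simp [dotProduct, mulVec, sq]
    _ ≤ ∑ i, (∑ j, A i j ^ 2) * ∑ j, x j ^ 2 :=
      Finset.sum_le_sum fun i _ => Finset.sum_mul_sq_le_sq_mul_sq _ _ _
    _ = _ := by simp [dotProduct, sq, Finset.sum_mul]

lemma frobNorm_fromCols_sq {κ' : Type*} [Fintype κ'] (X : Matrix ι κ ℝ) (Y : Matrix ι κ' ℝ) :
    frobNorm (fromCols X Y) ^ 2 = frobNorm X ^ 2 + frobNorm Y ^ 2 := by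
  simp only [frobNorm_sq, Fintype.sum_sum_type, fromCols_apply_inl, fromCols_apply_inr,
    Finset.sum_add_distrib]

lemma norm_le_frobNorm_fromCols_left [DecidableEq κ] {κ' : Type*} [Fintype κ'] (X : Matrix ι κ ℝ)
    (Y : Matrix ι κ' ℝ) : ‖X‖ ≤ frobNorm (fromCols X Y) := by
  refine (norm_le_frobNorm X).trans ((sq_le_sq₀ (frobNorm_nonneg _) (frobNorm_nonneg _)).1 ?_)
  rw [frobNorm_fromCols_sq]
  nlinarith

lemma norm_le_frobNorm_fromCols_right {κ' : Type*} [Fintype κ'] [DecidableEq κ']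
    (X : Matrix ι κ ℝ) (Y : Matrix ι κ' ℝ) : ‖Y‖ ≤ frobNorm (fromCols X Y) := by
  refine (norm_le_frobNorm Y).trans ((sq_le_sq₀ (frobNorm_nonneg _) (frobNorm_nonneg _)).1 ?_)
  rw [frobNorm_fromCols_sq]
  nlinarith

lemma norm_transpose_mul_mul_sub_le [DecidableEq ι] [DecidableEq κ] (P : Matrix ι ι ℝ)
    (X Y : Matrix ι κ ℝ) : ‖Xᵀ * P * X - Yᵀ * P * Y‖ ≤ (‖X‖ + ‖Y‖) * ‖P‖ * ‖X - Y‖ := by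
  have hT (Z : Matrix ι κ ℝ) : ‖Zᵀ‖ = ‖Z‖ := by
    rw [← conjTranspose_eq_transpose_of_trivial, l2_opNorm_conjTranspose]
  have hsplit : Xᵀ * P * X - Yᵀ * P * Y = Xᵀ * P * (X - Y) + (X - Y)ᵀ * P * Y := by
    simp only [Matrix.mul_sub, transpose_sub, Matrix.sub_mul]; abel
  rw [hsplit]
  calc _ ≤ ‖Xᵀ‖ * ‖P‖ * ‖X - Y‖ + ‖(X - Y)ᵀ‖ * ‖P‖ * ‖Y‖ := by
        grw [norm_add_le, l2_opNorm_mul, l2_opNorm_mul, l2_opNorm_mul, l2_opNorm_mul]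
    _ = _ := by rw [hT, hT]; ring

lemma norm_transpose_mul_mul_sub_transpose_mul_mul_le [DecidableEq ι] [DecidableEq κ]
    (P P' : Matrix ι ι ℝ) (X Y : Matrix ι κ ℝ) :
    ‖Xᵀ * P' * X - Yᵀ * P * Y‖ ≤ ‖X‖ ^ 2 * ‖P' - P‖ + (‖X‖ + ‖Y‖) * ‖P‖ * ‖X - Y‖ := by
  have hsplit : Xᵀ * P' * X - Yᵀ * P * Y = Xᵀ * (P' - P) * X + (Xᵀ * P * X - Yᵀ * P * Y) := by
    simp only [Matrix.mul_sub, Matrix.sub_mul]; abel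
  rw [hsplit]
  refine (norm_add_le _ _).trans (add_le_add ?_ (norm_transpose_mul_mul_sub_le P X Y))
  grw [l2_opNorm_mul, l2_opNorm_mul, ← conjTranspose_eq_transpose_of_trivial,
    l2_opNorm_conjTranspose]
  exact le_of_eq (by ring)

lemma tendsto_pow_mulVec_dotProduct_self [DecidableEq ι] {P N : Matrix ι ι ℝ} {σ : ℝ} (hσ : 0 < σ)
    (hP : P.PosSemidef) (hN : ∀ x, (N *ᵥ x) ⬝ᵥ P *ᵥ (N *ᵥ x) + σ * (x ⬝ᵥ x) ≤ x ⬝ᵥ P *ᵥ x)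
    (x : ι → ℝ) : Tendsto (fun k : ℕ => (N ^ k *ᵥ x) ⬝ᵥ (N ^ k *ᵥ x)) atTop (𝓝 0) := by
  have htelescope (K : ℕ) : σ * ∑ k ∈ Finset.range K, (N ^ k *ᵥ x) ⬝ᵥ (N ^ k *ᵥ x)
      + (N ^ K *ᵥ x) ⬝ᵥ P *ᵥ (N ^ K *ᵥ x) ≤ x ⬝ᵥ P *ᵥ x := by
    induction K with
    | zero => simp
    | succ K ih =>
      have := hN (N ^ K *ᵥ x)
      rw [mulVec_mulVec, ← pow_succ'] at this
      rw [Finset.sum_range_succ]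
      linarith
  refine (summable_of_sum_range_le (c := x ⬝ᵥ P *ᵥ x / σ) (fun k => dotProduct_self_nonneg _)
    fun K => ?_).tendsto_atTop_zero
  rw [le_div_iff₀' hσ]
  linarith [htelescope K, hP.dotProduct_mulVec_nonneg_real (N ^ K *ᵥ x)]

/-- `D - (c / σ) • P` does not decrease along the orbits of `N`, which tend to `0`. -/
lemma dotProduct_mulVec_le_of_lyapunov [DecidableEq ι] {D P N : Matrix ι ι ℝ} {σ c : ℝ}
    (hσ : 0 < σ) (hc : 0 ≤ c) (hP : P.PosSemidef)
    (hN : ∀ x, (N *ᵥ x) ⬝ᵥ P *ᵥ (N *ᵥ x) + σ * (x ⬝ᵥ x) ≤ x ⬝ᵥ P *ᵥ x)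
    (hD : ∀ x, x ⬝ᵥ D *ᵥ x ≤ (N *ᵥ x) ⬝ᵥ D *ᵥ (N *ᵥ x) + c * (x ⬝ᵥ x)) (x : ι → ℝ) :
    x ⬝ᵥ D *ᵥ x ≤ c / σ * (x ⬝ᵥ P *ᵥ x) := by
  set D' := D - (c / σ) • P
  have hD'_apply (y : ι → ℝ) : y ⬝ᵥ D' *ᵥ y = y ⬝ᵥ D *ᵥ y - c / σ * (y ⬝ᵥ P *ᵥ y) := by
    simp only [D', sub_mulVec, smul_mulVec, dotProduct_sub, dotProduct_smul, smul_eq_mul]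
  have hD'_step (y : ι → ℝ) : y ⬝ᵥ D' *ᵥ y ≤ (N *ᵥ y) ⬝ᵥ D' *ᵥ (N *ᵥ y) := by
    have hP_step := mul_le_mul_of_nonneg_left (hN y) (div_nonneg hc hσ.le)
    rw [mul_add, ← mul_assoc, div_mul_cancel₀ c hσ.ne'] at hP_step
    rw [hD'_apply, hD'_apply]
    linarith [hD y]
  have hD'_iter (k : ℕ) : x ⬝ᵥ D' *ᵥ x ≤ (N ^ k *ᵥ x) ⬝ᵥ D' *ᵥ (N ^ k *ᵥ x) := by
    induction k with
    | zero => simp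
    | succ k ih => rw [pow_succ', ← mulVec_mulVec]; exact ih.trans (hD'_step _)
  have hD'_nonpos : x ⬝ᵥ D' *ᵥ x ≤ 0 := by
    have hlim := (tendsto_pow_mulVec_dotProduct_self hσ hP hN x).const_mul ‖D'‖
    rw [mul_zero] at hlim
    exact ge_of_tendsto' hlim fun k => (hD'_iter k).trans (dotProduct_mulVec_le_norm_mul _ _)
  linarith [hD'_apply x]

end Matrix

namespace LQR

open Matrix

variable {ι κ : Type*} [Fintype ι] [Fintype κ]

def IsDARESolution [DecidableEq κ] (A : Matrix ι ι ℝ) (B : Matrix ι κ ℝ) (Q P : Matrix ι ι ℝ) :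
    Prop :=
  P.PosSemidef ∧ P = Aᵀ * P * A - Aᵀ * P * B * (Bᵀ * P * B + 1)⁻¹ * (Bᵀ * P * A) + Q

noncomputable def lqrGain [DecidableEq κ] (A : Matrix ι ι ℝ) (B : Matrix ι κ ℝ)
    (P : Matrix ι ι ℝ) : Matrix κ ι ℝ :=
  -((Bᵀ * P * B + 1)⁻¹ * (Bᵀ * P * A))

/-- Stage cost `xᵀ Q x + ‖K x‖²` plus cost-to-go `P` after one step of the policy `u = K x`. -/
def closedLoopCost (A : Matrix ι ι ℝ) (B : Matrix ι κ ℝ) (Q P : Matrix ι ι ℝ)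
    (K : Matrix κ ι ℝ) : Matrix ι ι ℝ :=
  (A + B * K)ᵀ * P * (A + B * K) + Kᵀ * K + Q

lemma posDef_transpose_mul_mul_add_one [DecidableEq κ] {P : Matrix ι ι ℝ} (B : Matrix ι κ ℝ)
    (hP : P.PosSemidef) : (Bᵀ * P * B + 1).PosDef := by
  have := hP.conjTranspose_mul_mul_same B
  rw [conjTranspose_eq_transpose_of_trivial] at this
  exact PosDef.posSemidef_add this PosDef.one

variable {A : Matrix ι ι ℝ} {B : Matrix ι κ ℝ} {Q P : Matrix ι ι ℝ}

lemma dotProduct_closedLoopCost (K : Matrix κ ι ℝ) (x : ι → ℝ) :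
    x ⬝ᵥ closedLoopCost A B Q P K *ᵥ x = ((A + B * K) *ᵥ x) ⬝ᵥ P *ᵥ ((A + B * K) *ᵥ x)
      + (K *ᵥ x) ⬝ᵥ (K *ᵥ x) + x ⬝ᵥ Q *ᵥ x := by
  rw [closedLoopCost, add_mulVec, add_mulVec, dotProduct_add, dotProduct_add,
    dotProduct_transpose_mul_mul_mulVec, dotProduct_transpose_mul_mulVec]

variable [DecidableEq κ]

lemma closedLoopCost_eq (hP : IsDARESolution A B Q P) (K : Matrix κ ι ℝ) :
    closedLoopCost A B Q P K
      = P + (K - lqrGain A B P)ᵀ * (Bᵀ * P * B + 1) * (K - lqrGain A B P) := by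
  obtain ⟨hPsd, hdare⟩ := hP
  have hPt : Pᵀ = P := hPsd.1
  set Ψ := Bᵀ * P * B + 1
  set K₀ := lqrGain A B P
  have hΨt : Ψᵀ = Ψ := by simp [Ψ, transpose_mul, hPt, Matrix.mul_assoc]
  have hΨK₀ : Ψ * K₀ = -(Bᵀ * P * A) := by
    have hdet : IsUnit Ψ.det := (posDef_transpose_mul_mul_add_one B hPsd).isUnit.map detMonoidHom
    rw [show K₀ = -(Ψ⁻¹ * (Bᵀ * P * A)) from rfl, Matrix.mul_neg, ← Matrix.mul_assoc,
      mul_nonsing_inv _ hdet, Matrix.one_mul]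
  have hK₀Ψ : K₀ᵀ * Ψ = -(Aᵀ * P * B) := by
    rw [← hΨt, ← transpose_mul, hΨK₀]; simp [transpose_mul, hPt, Matrix.mul_assoc]
  have hdare' : P = Aᵀ * P * A + Aᵀ * P * B * K₀ + Q := by
    nth_rewrite 1 [hdare]
    simp only [K₀, lqrGain, Ψ, sub_eq_add_neg, Matrix.mul_neg, Matrix.mul_assoc]
  calc closedLoopCost A B Q P K
      = (Aᵀ * P * A + Aᵀ * P * B * K₀ + Q) + (Kᵀ * Ψ * K - Kᵀ * (Ψ * K₀) - (K₀ᵀ * Ψ) * K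
          + (K₀ᵀ * Ψ) * K₀) := by
        rw [hΨK₀, hK₀Ψ]
        simp only [closedLoopCost, Ψ, transpose_add, transpose_mul, Matrix.add_mul, Matrix.mul_add,
          Matrix.mul_assoc, Matrix.mul_one, Matrix.neg_mul, Matrix.mul_neg]
        abel
    _ = _ := by
        rw [← hdare']
        simp only [transpose_sub, Matrix.sub_mul, Matrix.mul_sub, Matrix.mul_assoc]
        abel

lemma closedLoopCost_lqrGain (hP : IsDARESolution A B Q P) :
    closedLoopCost A B Q P (lqrGain A B P) = P := by
  simp [closedLoopCost_eq hP]

lemma dotProduct_mulVec_le_closedLoopCost (hP : IsDARESolution A B Q P) (K : Matrix κ ι ℝ)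
    (x : ι → ℝ) : x ⬝ᵥ P *ᵥ x ≤ x ⬝ᵥ closedLoopCost A B Q P K *ᵥ x := by
  rw [closedLoopCost_eq hP, add_mulVec, dotProduct_add, dotProduct_transpose_mul_mul_mulVec]
  linarith [(posDef_transpose_mul_mul_add_one B hP.1).posSemidef.dotProduct_mulVec_nonneg_real
    ((K - lqrGain A B P) *ᵥ x)]

lemma dotProduct_sub_le_of_common_gain {A' : Matrix ι ι ℝ} {B' : Matrix ι κ ℝ}
    {P' : Matrix ι ι ℝ} (hP : IsDARESolution A B Q P) (hP' : IsDARESolution A' B' Q P')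
    (x : ι → ℝ) :
    x ⬝ᵥ (P' - P) *ᵥ x
      ≤ ((A' + B' * lqrGain A B P) *ᵥ x) ⬝ᵥ P' *ᵥ ((A' + B' * lqrGain A B P) *ᵥ x)
        - ((A + B * lqrGain A B P) *ᵥ x) ⬝ᵥ P *ᵥ ((A + B * lqrGain A B P) *ᵥ x) := by
  have h' := dotProduct_mulVec_le_closedLoopCost hP' (lqrGain A B P) x
  have h := congrArg (x ⬝ᵥ · *ᵥ x) (closedLoopCost_lqrGain hP)
  simp only [dotProduct_closedLoopCost] at h h'
  rw [sub_mulVec, dotProduct_sub]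
  linarith

lemma dotProduct_closedLoop_sub_le [DecidableEq ι] {A' : Matrix ι ι ℝ} {B' : Matrix ι κ ℝ}
    {K : Matrix κ ι ℝ} (R : Matrix ι ι ℝ) {δ s : ℝ} (hA : ‖A' - A‖ ≤ δ) (hB : ‖B' - B‖ ≤ δ)
    (hδ : δ ≤ 1 / 16) (hs : 1 ≤ s) (hK : ‖K‖ ≤ s) (hM : ‖A + B * K‖ ≤ s) (x : ι → ℝ) :
    ((A' + B' * K) *ᵥ x) ⬝ᵥ R *ᵥ ((A' + B' * K) *ᵥ x)
        - ((A + B * K) *ᵥ x) ⬝ᵥ R *ᵥ ((A + B * K) *ᵥ x)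
      ≤ 17 / 4 * δ * s ^ 2 * ‖R‖ * (x ⬝ᵥ x) := by
  have hδ0 : 0 ≤ δ := (norm_nonneg _).trans hA
  have hdiff : ‖(A' + B' * K) - (A + B * K)‖ ≤ 2 * δ * s := by
    rw [show (A' + B' * K) - (A + B * K) = (A' - A) + (B' - B) * K by
      rw [Matrix.sub_mul]; abel]
    calc _ ≤ ‖A' - A‖ + ‖B' - B‖ * ‖K‖ := (norm_add_le _ _).trans (by grw [l2_opNorm_mul])
      _ ≤ δ + δ * s := by gcongr
      _ ≤ 2 * δ * s := by nlinarith
  have hN : ‖A' + B' * K‖ ≤ s + 2 * δ * s := by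
    calc _ ≤ ‖A + B * K‖ + ‖(A' + B' * K) - (A + B * K)‖ := norm_le_norm_add_norm_sub' _ _
      _ ≤ _ := by gcongr
  rw [← dotProduct_transpose_mul_mul_mulVec, ← dotProduct_transpose_mul_mul_mulVec,
    ← dotProduct_sub, ← sub_mulVec]
  refine (dotProduct_mulVec_le_norm_mul _ _).trans ?_
  gcongr
  · exact dotProduct_self_nonneg x
  calc _ ≤ (‖A' + B' * K‖ + ‖A + B * K‖) * ‖R‖ * ‖(A' + B' * K) - (A + B * K)‖ :=
        norm_transpose_mul_mul_sub_le _ _ _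
    _ ≤ (s + 2 * δ * s + s) * ‖R‖ * (2 * δ * s) := by gcongr
    _ ≤ _ := by
      have : 0 ≤ ‖R‖ * δ * s ^ 2 := by positivity
      nlinarith

variable [DecidableEq ι]

lemma closedLoop_lyapunov (hQ : (Q - 1).PosSemidef) (hP : IsDARESolution A B Q P) (x : ι → ℝ) :
    ((A + B * lqrGain A B P) *ᵥ x) ⬝ᵥ P *ᵥ ((A + B * lqrGain A B P) *ᵥ x) + x ⬝ᵥ x
      ≤ x ⬝ᵥ P *ᵥ x := by
  have h := congrArg (x ⬝ᵥ · *ᵥ x) (closedLoopCost_lqrGain hP)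
  simp only [dotProduct_closedLoopCost] at h
  linarith [dotProduct_self_le_of_posSemidef_sub_one hQ x,
    dotProduct_self_nonneg (lqrGain A B P *ᵥ x)]

lemma dotProduct_self_le_dotProduct_mulVec (hQ : (Q - 1).PosSemidef)
    (hP : IsDARESolution A B Q P) (x : ι → ℝ) : x ⬝ᵥ x ≤ x ⬝ᵥ P *ᵥ x := by
  linarith [closedLoop_lyapunov hQ hP x,
    hP.1.dotProduct_mulVec_nonneg_real ((A + B * lqrGain A B P) *ᵥ x)]

lemma norm_lqrGain_sq_le (hQ : (Q - 1).PosSemidef) (hP : IsDARESolution A B Q P) {c : ℝ}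
    (hc : 0 ≤ c) (hPc : ∀ x, x ⬝ᵥ P *ᵥ x ≤ c * (x ⬝ᵥ x)) : ‖lqrGain A B P‖ ^ 2 ≤ c := by
  refine norm_sq_le_of_mulVec_dotProduct_le hc fun x => le_trans ?_ (hPc x)
  have h := congrArg (x ⬝ᵥ · *ᵥ x) (closedLoopCost_lqrGain hP)
  simp only [dotProduct_closedLoopCost] at h
  linarith [hP.1.dotProduct_mulVec_nonneg_real ((A + B * lqrGain A B P) *ᵥ x),
    dotProduct_self_le_of_posSemidef_sub_one hQ x, dotProduct_self_nonneg x]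

lemma norm_closedLoop_sq_le (hQ : (Q - 1).PosSemidef) (hP : IsDARESolution A B Q P) {c : ℝ}
    (hc : 0 ≤ c) (hPc : ∀ x, x ⬝ᵥ P *ᵥ x ≤ c * (x ⬝ᵥ x)) :
    ‖A + B * lqrGain A B P‖ ^ 2 ≤ c :=
  norm_sq_le_of_mulVec_dotProduct_le hc fun x =>
    (dotProduct_self_le_dotProduct_mulVec hQ hP _).trans <| by
      linarith [closedLoop_lyapunov hQ hP x, hPc x, dotProduct_self_nonneg x]

variable {A₁ A₂ : Matrix ι ι ℝ} {B₁ B₂ : Matrix ι κ ℝ} {P₁ P₂ : Matrix ι ι ℝ} {δ : ℝ}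

lemma dotProduct_sub_mulVec_le_of_perturbation (hQ : (Q - 1).PosSemidef)
    (h₁ : IsDARESolution A₁ B₁ Q P₁) (h₂ : IsDARESolution A₂ B₂ Q P₂) (hA : ‖A₂ - A₁‖ ≤ δ)
    (hB : ‖B₂ - B₁‖ ≤ δ) (hL : 1 ≤ ‖P₁‖) (hδ : δ * ‖P₁‖ ^ 2 ≤ 1 / 16) (x : ι → ℝ) :
    x ⬝ᵥ (P₂ - P₁) *ᵥ x ≤ 17 / 2 * δ * ‖P₁‖ ^ 3 * (x ⬝ᵥ x) := by
  set L := ‖P₁‖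
  have hδ0 : 0 ≤ δ := (norm_nonneg _).trans hA
  have hδ16 : δ ≤ 1 / 16 := (le_mul_of_one_le_right hδ0 (one_le_pow₀ hL)).trans hδ
  have hs : 1 ≤ √L := Real.one_le_sqrt.2 hL
  have hK := Real.le_sqrt_of_sq_le <|
    norm_lqrGain_sq_le hQ h₁ (by linarith) (dotProduct_mulVec_le_norm_mul P₁)
  have hM := Real.le_sqrt_of_sq_le <|
    norm_closedLoop_sq_le hQ h₁ (by linarith) (dotProduct_mulVec_le_norm_mul P₁)
  have hbracket := dotProduct_closedLoop_sub_le P₁ hA hB hδ16 hs hK hM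
  rw [Real.sq_sqrt (by linarith)] at hbracket
  have hε : 17 / 4 * δ * L * L ≤ 1 / 2 := by nlinarith
  have hN (y : ι → ℝ) : ((A₂ + B₂ * lqrGain A₁ B₁ P₁) *ᵥ y) ⬝ᵥ P₁ *ᵥ
      ((A₂ + B₂ * lqrGain A₁ B₁ P₁) *ᵥ y) + 1 / 2 * (y ⬝ᵥ y) ≤ y ⬝ᵥ P₁ *ᵥ y := by
    nlinarith [closedLoop_lyapunov hQ h₁ y, hbracket y, dotProduct_self_nonneg y]
  have hD (y : ι → ℝ) : y ⬝ᵥ (P₂ - P₁) *ᵥ y ≤ ((A₂ + B₂ * lqrGain A₁ B₁ P₁) *ᵥ y) ⬝ᵥ (P₂ - P₁) *ᵥ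
      ((A₂ + B₂ * lqrGain A₁ B₁ P₁) *ᵥ y) + 17 / 4 * δ * L * L * (y ⬝ᵥ y) := by
    have hstep := dotProduct_sub_le_of_common_gain h₁ h₂ y
    simp only [sub_mulVec, dotProduct_sub] at hstep ⊢
    linarith [hbracket y]
  calc _ ≤ 17 / 4 * δ * L * L / (1 / 2) * (x ⬝ᵥ P₁ *ᵥ x) :=
        dotProduct_mulVec_le_of_lyapunov (by norm_num) (by positivity) h₁.1 hN hD x
    _ ≤ 17 / 4 * δ * L * L / (1 / 2) * (L * (x ⬝ᵥ x)) := by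
        gcongr; exact dotProduct_mulVec_le_norm_mul P₁ x
    _ = _ := by ring

lemma dotProduct_sub_mulVec_le_of_perturbation_of_le (hQ : (Q - 1).PosSemidef)
    (h₁ : IsDARESolution A₁ B₁ Q P₁) (h₂ : IsDARESolution A₂ B₂ Q P₂) (hA : ‖A₁ - A₂‖ ≤ δ)
    (hB : ‖B₁ - B₂‖ ≤ δ) (hL : 1 ≤ ‖P₁‖) (hδ : δ * ‖P₁‖ ^ 2 ≤ 1 / 16)
    (hP₂ : ∀ x, x ⬝ᵥ P₂ *ᵥ x ≤ 49 / 32 * ‖P₁‖ * (x ⬝ᵥ x)) (x : ι → ℝ) :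
    x ⬝ᵥ (P₁ - P₂) *ᵥ x ≤ 20825 / 2048 * δ * ‖P₁‖ ^ 3 * (x ⬝ᵥ x) := by
  set L := ‖P₁‖
  have hδ0 : 0 ≤ δ := (norm_nonneg _).trans hA
  have hδ16 : δ ≤ 1 / 16 := (le_mul_of_one_le_right hδ0 (one_le_pow₀ hL)).trans hδ
  set s := 5 / 4 * √L
  have hs : 1 ≤ s := by have := Real.one_le_sqrt.2 hL; linarith [show s = 5 / 4 * √L from rfl]
  have hs2 : s ^ 2 = 25 / 16 * L := by rw [mul_pow, Real.sq_sqrt (by linarith)]; norm_num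
  have hP₂s : 49 / 32 * L ≤ s ^ 2 := by rw [hs2]; linarith
  have hK : ‖lqrGain A₂ B₂ P₂‖ ≤ s :=
    (sq_le_sq₀ (norm_nonneg _) (by linarith)).1 <|
      (norm_lqrGain_sq_le hQ h₂ (by positivity) hP₂).trans hP₂s
  have hM : ‖A₂ + B₂ * lqrGain A₂ B₂ P₂‖ ≤ s :=
    (sq_le_sq₀ (norm_nonneg _) (by linarith)).1 <|
      (norm_closedLoop_sq_le hQ h₂ (by positivity) hP₂).trans hP₂s
  have hbracket := dotProduct_closedLoop_sub_le P₁ hA hB hδ16 hs hK hM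
  rw [hs2] at hbracket
  have hN (y : ι → ℝ) : ((A₂ + B₂ * lqrGain A₂ B₂ P₂) *ᵥ y) ⬝ᵥ P₂ *ᵥ
      ((A₂ + B₂ * lqrGain A₂ B₂ P₂) *ᵥ y) + 1 * (y ⬝ᵥ y) ≤ y ⬝ᵥ P₂ *ᵥ y := by
    simpa using closedLoop_lyapunov hQ h₂ y
  have hD (y : ι → ℝ) : y ⬝ᵥ (P₁ - P₂) *ᵥ y ≤ ((A₂ + B₂ * lqrGain A₂ B₂ P₂) *ᵥ y) ⬝ᵥ (P₁ - P₂) *ᵥ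
      ((A₂ + B₂ * lqrGain A₂ B₂ P₂) *ᵥ y) + 17 / 4 * δ * (25 / 16 * L) * L * (y ⬝ᵥ y) := by
    have hstep := dotProduct_sub_le_of_common_gain h₂ h₁ y
    simp only [sub_mulVec, dotProduct_sub] at hstep ⊢
    linarith [hbracket y]
  calc _ ≤ 17 / 4 * δ * (25 / 16 * L) * L / 1 * (x ⬝ᵥ P₂ *ᵥ x) :=
        dotProduct_mulVec_le_of_lyapunov one_pos (by positivity) h₂.1 hN hD x
    _ ≤ 17 / 4 * δ * (25 / 16 * L) * L / 1 * (49 / 32 * L * (x ⬝ᵥ x)) := by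
        gcongr; exact hP₂ x
    _ = _ := by ring

lemma norm_sub_le_of_perturbation (hQ : (Q - 1).PosSemidef)
    (h₁ : IsDARESolution A₁ B₁ Q P₁) (h₂ : IsDARESolution A₂ B₂ Q P₂) (hA : ‖A₁ - A₂‖ ≤ δ)
    (hB : ‖B₁ - B₂‖ ≤ δ) (hL : 1 ≤ ‖P₁‖) (hδ : δ * ‖P₁‖ ^ 2 ≤ 1 / 16) :
    ‖P₂ - P₁‖ ≤ 20825 / 2048 * δ * ‖P₁‖ ^ 3 := by
  have hδ0 : 0 ≤ δ := (norm_nonneg _).trans hA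
  have hupper := dotProduct_sub_mulVec_le_of_perturbation hQ h₁ h₂ (by rwa [norm_sub_rev])
    (by rwa [norm_sub_rev]) hL hδ
  have hP₂ (x : ι → ℝ) : x ⬝ᵥ P₂ *ᵥ x ≤ 49 / 32 * ‖P₁‖ * (x ⬝ᵥ x) := by
    have h := hupper x
    simp only [sub_mulVec, dotProduct_sub] at h
    have hδL : δ * ‖P₁‖ ^ 3 ≤ 1 / 16 * ‖P₁‖ := by
      rw [pow_succ, ← mul_assoc]; exact mul_le_mul_of_nonneg_right hδ (norm_nonneg _)
    nlinarith [dotProduct_mulVec_le_norm_mul P₁ x, dotProduct_self_nonneg x]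
  have hlower := dotProduct_sub_mulVec_le_of_perturbation_of_le hQ h₁ h₂ hA hB hL hδ hP₂
  refine norm_le_of_abs_dotProduct_mulVec_le (h₂.1.isHermitian.sub h₁.1.isHermitian)
    (by positivity) fun x => abs_le.2 ⟨?_, ?_⟩
  · have h := hlower x
    rw [← neg_sub, neg_mulVec, dotProduct_neg] at h
    linarith
  · have : 0 ≤ δ * ‖P₁‖ ^ 3 * (x ⬝ᵥ x) := by have := dotProduct_self_nonneg x; positivity
    linarith [hupper x]

end LQR

theorem psi_perturbation_general {n m : ℕ}
    (A₁ A₂ : Matrix (Fin n) (Fin n) ℝ) (B₁ B₂ : Matrix (Fin n) (Fin m) ℝ)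
    (Q P₁ P₂ : Matrix (Fin n) (Fin n) ℝ)
    (Ψ₁ Ψ₂ : Matrix (Fin m) (Fin m) ℝ) (τ₁ δ : ℝ)
    (hQ : (Q - 1).PosSemidef)
    (hP₁ : P₁.PosSemidef)
    (hdare₁ : P₁ = A₁ᵀ * P₁ * A₁ - A₁ᵀ * P₁ * B₁ * (B₁ᵀ * P₁ * B₁ + 1)⁻¹ * (B₁ᵀ * P₁ * A₁) + Q)
    (hP₂ : P₂.PosSemidef)
    (hdare₂ : P₂ = A₂ᵀ * P₂ * A₂ - A₂ᵀ * P₂ * B₂ * (B₂ᵀ * P₂ * B₂ + 1)⁻¹ * (B₂ᵀ * P₂ * A₂) + Q)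
    (hΨ₁ : Ψ₁ = B₁ᵀ * P₁ * B₁ + 1) (hΨ₂ : Ψ₂ = B₂ᵀ * P₂ * B₂ + 1)
    (hτ : τ₁ = max (spNorm B₁) 1)
    (hδdef : δ = frobNorm (Matrix.fromCols (A₁ - A₂) (B₁ - B₂)))
    (hδ : δ ≤ (1 / 16) * spNorm P₁ ^ (-(2 : ℝ))) :
    spNorm (Ψ₂ - Ψ₁) ≤ 15 * τ₁ ^ 2 * spNorm P₁ ^ 3 * δ := by
  simp only [spNorm_eq_norm] at hτ hδ ⊢
  have hΨ : Ψ₂ - Ψ₁ = B₂ᵀ * P₂ * B₂ - B₁ᵀ * P₁ * B₁ := by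
    rw [hΨ₁, hΨ₂, add_sub_add_right_eq_sub]
  have hδ0 : 0 ≤ δ := hδdef ▸ frobNorm_nonneg _
  rcases isEmpty_or_nonempty (Fin n) with hn | hn
  · have hzero (B : Matrix (Fin n) (Fin m) ℝ) (P : Matrix (Fin n) (Fin n) ℝ) : Bᵀ * P * B = 0 := by
      ext; simp [Matrix.mul_apply]
    rw [hΨ, hzero, hzero, sub_zero, norm_zero]
    positivity
  have h₁ : LQR.IsDARESolution A₁ B₁ Q P₁ := ⟨hP₁, hdare₁⟩
  have h₂ : LQR.IsDARESolution A₂ B₂ Q P₂ := ⟨hP₂, hdare₂⟩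
  set L := ‖P₁‖
  have hL : 1 ≤ L :=
    one_le_norm_of_dotProduct_self_le (LQR.dotProduct_self_le_dotProduct_mulVec hQ h₁)
  have hδL : δ * L ^ 2 ≤ 1 / 16 := by
    rwa [Real.rpow_neg (by positivity), Real.rpow_two, ← div_eq_mul_inv,
      le_div_iff₀ (by positivity)] at hδ
  have hP := LQR.norm_sub_le_of_perturbation hQ h₁ h₂
    (hδdef ▸ norm_le_frobNorm_fromCols_left _ _) (hδdef ▸ norm_le_frobNorm_fromCols_right _ _) hL hδL
  have hτ1 : 1 ≤ τ₁ := hτ ▸ le_max_right _ _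
  have hB₁ : ‖B₁‖ ≤ τ₁ := hτ ▸ le_max_left _ _
  have hB : ‖B₂ - B₁‖ ≤ δ := norm_sub_rev B₁ B₂ ▸ hδdef ▸ norm_le_frobNorm_fromCols_right _ _
  have hB₂ : ‖B₂‖ ≤ 17 / 16 * τ₁ := by
    have : δ ≤ 1 / 16 := (le_mul_of_one_le_right hδ0 (one_le_pow₀ hL)).trans hδL
    linarith [norm_le_norm_add_norm_sub' B₂ B₁]
  calc ‖Ψ₂ - Ψ₁‖ ≤ ‖B₂‖ ^ 2 * ‖P₂ - P₁‖ + (‖B₂‖ + ‖B₁‖) * L * ‖B₂ - B₁‖ :=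
        hΨ ▸ norm_transpose_mul_mul_sub_transpose_mul_mul_le P₁ P₂ B₂ B₁
    _ ≤ (17 / 16 * τ₁) ^ 2 * (20825 / 2048 * δ * L ^ 3) + (17 / 16 * τ₁ + τ₁) * L * δ := by
        gcongr
    _ ≤ 15 * τ₁ ^ 2 * L ^ 3 * δ := by
        have : τ₁ * L * δ ≤ τ₁ ^ 2 * L ^ 3 * δ := by gcongr <;> nlinarith
        have : 0 ≤ τ₁ ^ 2 * L ^ 3 * δ := by positivity
        linarith

/-- Perturbation bound on Ψ = BᵀPB + I between two nearby systems. -/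
theorem psi_perturbation {n m : ℕ}
    (A₁ A₂ : Matrix (Fin n) (Fin n) ℝ) (B₁ B₂ : Matrix (Fin n) (Fin m) ℝ)
    (Q P₁ P₂ : Matrix (Fin n) (Fin n) ℝ)
    (Ψ₁ Ψ₂ : Matrix (Fin m) (Fin m) ℝ) (τ₁ δ : ℝ)
    (hQsym : Q.IsHermitian) (hQ : (Q - 1).PosSemidef)
    (hP₁ : P₁.PosSemidef)
    (hdare₁ : P₁ = A₁ᵀ * P₁ * A₁ - A₁ᵀ * P₁ * B₁ * (B₁ᵀ * P₁ * B₁ + 1)⁻¹ * (B₁ᵀ * P₁ * A₁) + Q)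
    (hP₂ : P₂.PosSemidef)
    (hdare₂ : P₂ = A₂ᵀ * P₂ * A₂ - A₂ᵀ * P₂ * B₂ * (B₂ᵀ * P₂ * B₂ + 1)⁻¹ * (B₂ᵀ * P₂ * A₂) + Q)
    (hΨ₁ : Ψ₁ = B₁ᵀ * P₁ * B₁ + 1) (hΨ₂ : Ψ₂ = B₂ᵀ * P₂ * B₂ + 1)
    (hτ : τ₁ = max (spNorm B₁) 1)
    (hδdef : δ = frobNorm (Matrix.fromCols (A₁ - A₂) (B₁ - B₂)))
    (hδ : δ ≤ (1 / 16) * spNorm P₁ ^ (-(2 : ℝ))) :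
    spNorm (Ψ₂ - Ψ₁) ≤ 15 * τ₁ ^ 2 * spNorm P₁ ^ 3 * δ :=
  psi_perturbation_general A₁ A₂ B₁ B₂ Q P₁ P₂ Ψ₁ Ψ₂ τ₁ δ hQ hP₁ hdare₁ hP₂ hdare₂ hΨ₁ hΨ₂ hτ hδdef
    hδ
end

section
/- Let d ≥ 1 and let Γ ∈ ℝ^{d×d} be symmetric positive definite. Let μ be the uniform probability measure on the ellipsoid E = {w ∈ ℝ^d : wᵀΓw ≤ 1} (Lebesgue measure restricted to E and normalized). Then μ has mean zero and its covariance matrix satisfies ∫_E w wᵀ dμ(w) = (1/(d + 2))·Γ⁻¹. -/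
/-!
Write `Γ = Bᵀ B` with `B` invertible. The ellipsoid is then the image of the closed unit ball
under `B⁻¹`, and since a linear change of variables rescales Lebesgue measure by a constant, the
uniform measure on the ellipsoid is the push-forward of the uniform measure on the ball. On the
ball, coordinate reflections and permutations force the second moments to be `c δₖₗ`, and polar
coordinates give `∫ ‖x‖² = d / (d + 2)`, so `c = 1 / (d + 2)`. Hence the covariance is
`B⁻¹ B⁻ᵀ / (d + 2) = Γ⁻¹ / (d + 2)`. The mean vanishes because the ellipsoid is symmetric.
-/

open MeasureTheory ProbabilityTheory Metric Matrix Set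

section LinearImage

variable {F : Type*} [NormedAddCommGroup F] [NormedSpace ℝ F] [MeasurableSpace F] [BorelSpace F]
  [FiniteDimensional ℝ F] (μ : Measure F) [μ.IsAddHaarMeasure]

theorem cond_image_linearEquiv (T : F ≃ₗ[ℝ] F) (s : Set F) : μ[|T '' s] = (μ[|s]).map T := by
  have hdet : LinearMap.det (T : F →ₗ[ℝ] F) ≠ 0 := (LinearEquiv.isUnit_det' T).ne_zero
  set c := ENNReal.ofReal |LinearMap.det (T : F →ₗ[ℝ] F)|
  have hc₀ : c ≠ 0 := by simpa [c] using hdet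
  have himage : μ (T '' s) = c * μ s := Measure.addHaar_image_linearMap μ (T : F →ₗ[ℝ] F) s
  have hmap : μ.map T = c⁻¹ • μ := by
    rw [← LinearEquiv.coe_coe, Measure.map_linearMap_addHaar_eq_smul_addHaar μ hdet, abs_inv,
      ENNReal.ofReal_inv_of_pos (abs_pos.mpr hdet)]
  have hrestrict : (μ.restrict s).map T = c⁻¹ • μ.restrict (T '' s) := by
    have := T.toContinuousLinearEquiv.toHomeomorph.toMeasurableEquiv.restrict_map μ (T '' s)
    change (μ.map T).restrict (T '' s) = (μ.restrict (T ⁻¹' (T '' s))).map T at this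
    rw [Set.preimage_image_eq s T.injective] at this
    rw [← this, hmap, Measure.restrict_smul]
  rw [ProbabilityTheory.cond, ProbabilityTheory.cond, Measure.map_smul, hrestrict, smul_smul,
    himage, ENNReal.mul_inv (.inl hc₀) (.inl ENNReal.ofReal_ne_top), mul_comm]

variable {G : Type*} [NormedAddCommGroup G] [NormedSpace ℝ G]

theorem integral_cond_image_linearEquiv (T : F ≃ₗ[ℝ] F) (s : Set F) (g : F → G) :
    ∫ y, g y ∂μ[|T '' s] = ∫ x, g (T x) ∂μ[|s] := by
  rw [cond_image_linearEquiv]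
  exact integral_map_equiv T.toContinuousLinearEquiv.toHomeomorph.toMeasurableEquiv g

theorem integral_cond_comp_linearEquiv_of_image_eq {T : F ≃ₗ[ℝ] F} {s : Set F} (hs : T '' s = s)
    (g : F → G) : ∫ x, g (T x) ∂μ[|s] = ∫ x, g x ∂μ[|s] := by
  rw [← integral_cond_image_linearEquiv, hs]

theorem integral_id_cond_eq_zero_of_neg_eq {s : Set F} (hs : -s = s) : ∫ x, x ∂μ[|s] = 0 := by
  have h := integral_cond_comp_linearEquiv_of_image_eq μ (T := LinearEquiv.neg ℝ)
    (by simpa [Set.image_neg_eq_neg] using hs) id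
  simp only [LinearEquiv.coe_neg, Pi.neg_apply, id] at h
  rw [integral_neg, neg_eq_iff_add_eq_zero, ← two_smul ℝ] at h
  exact (smul_eq_zero.mp h).resolve_left two_ne_zero

end LinearImage

theorem integrable_cond_of_isCompact {F G : Type*} [TopologicalSpace F] [T2Space F]
    [MeasurableSpace F] [OpensMeasurableSpace F] [NormedAddCommGroup G] {μ : Measure F}
    [IsFiniteMeasureOnCompacts μ] {g : F → G} (hg : Continuous g) {s : Set F} (hs : IsCompact s)
    (hs₀ : μ s ≠ 0) : Integrable g μ[|s] :=
  (hg.continuousOn.integrableOn_compact hs).smul_measure (ENNReal.inv_ne_top.mpr hs₀)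

theorem integral_cond_eq_inv_mul_setIntegral {Ω : Type*} [MeasurableSpace Ω] (μ : Measure Ω)
    (s : Set Ω) (g : Ω → ℝ) : ∫ x, g x ∂μ[|s] = (μ.real s)⁻¹ * ∫ x in s, g x ∂μ := by
  rw [ProbabilityTheory.cond, integral_smul_measure, ENNReal.toReal_inv, measureReal_def,
    smul_eq_mul]

theorem integral_Ioi_pow_mul_indicator_sq (n : ℕ) :
    ∫ y in Ioi (0 : ℝ), y ^ n * (Iic 1).indicator (fun y => y ^ 2) y = 1 / (n + 3) := by
  have h (y : ℝ) : y ^ n * (Iic 1).indicator (fun y => y ^ 2) y =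
      (Iic 1).indicator (fun y => y ^ (n + 2)) y := by
    by_cases hy : y ∈ Iic 1 <;> simp [hy, pow_add]
  simp_rw [h]
  rw [setIntegral_indicator measurableSet_Iic, Ioi_inter_Iic,
    ← intervalIntegral.integral_of_le zero_le_one, integral_pow]
  norm_num
  ring

section Ball

variable {F : Type*} [NormedAddCommGroup F] [MeasurableSpace F] [BorelSpace F]

theorem integral_norm_sq_cond_closedBall [NormedSpace ℝ F] [FiniteDimensional ℝ F] [Nontrivial F]
    (μ : Measure F) [μ.IsAddHaarMeasure] :
    ∫ x, ‖x‖ ^ 2 ∂μ[|closedBall (0 : F) 1] =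
      Module.finrank ℝ F / (Module.finrank ℝ F + 2) := by
  set n := Module.finrank ℝ F
  have hn : 1 ≤ n := Module.finrank_pos
  have hV : μ.real (closedBall (0 : F) 1) ≠ 0 :=
    (ENNReal.toReal_pos (measure_closedBall_pos μ 0 one_pos).ne' measure_closedBall_lt_top.ne).ne'
  have hpolar : ∫ x in closedBall (0 : F) 1, ‖x‖ ^ 2 ∂μ =
      n * μ.real (closedBall (0 : F) 1) / (n + 2) := by
    rw [← integral_indicator measurableSet_closedBall]
    have := integral_fun_norm_addHaar μ ((Iic (1 : ℝ)).indicator (fun y => y ^ 2))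
    simp only [smul_eq_mul, nsmul_eq_mul, integral_Ioi_pow_mul_indicator_sq] at this
    convert this using 1
    · congr 1 with x
      by_cases hx : ‖x‖ ≤ 1 <;> simp [indicator, hx]
    · rw [measureReal_def, measureReal_def, Measure.addHaar_closedBall_eq_addHaar_ball,
        Nat.cast_sub hn]
      ring
  rw [integral_cond_eq_inv_mul_setIntegral, hpolar]
  field_simp

theorem integral_cond_closedBall_comp_linearIsometryEquiv [InnerProductSpace ℝ F]
    [FiniteDimensional ℝ F] (μ : Measure F) [μ.IsAddHaarMeasure] {G : Type*}
    [NormedAddCommGroup G] [NormedSpace ℝ G] (e : F ≃ₗᵢ[ℝ] F) (r : ℝ) (g : F → G) :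
    ∫ x, g (e x) ∂μ[|closedBall 0 r] = ∫ x, g x ∂μ[|closedBall 0 r] :=
  integral_cond_comp_linearEquiv_of_image_eq μ (T := e.toLinearEquiv) (by simp) g

end Ball

section EuclideanBall

variable {ι : Type*} [Fintype ι]

theorem integrable_mul_cond_closedBall (k l : ι) (x₀ : EuclideanSpace ℝ ι) {r : ℝ} (hr : 0 < r) :
    Integrable (fun x : EuclideanSpace ℝ ι => x k * x l) volume[|closedBall x₀ r] :=
  integrable_cond_of_isCompact (by fun_prop) (isCompact_closedBall x₀ r)
    (measure_closedBall_pos volume x₀ hr).ne'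

theorem integral_mul_cond_closedBall_of_ne {k l : ι} (hkl : k ≠ l) :
    ∫ x : EuclideanSpace ℝ ι, x k * x l ∂volume[|closedBall 0 1] = 0 := by
  classical
  let reflect : EuclideanSpace ℝ ι ≃ₗᵢ[ℝ] EuclideanSpace ℝ ι :=
    LinearIsometryEquiv.piLpCongrRight 2 fun i =>
      if i = l then LinearIsometryEquiv.neg ℝ else LinearIsometryEquiv.refl ℝ ℝ
  have h := integral_cond_closedBall_comp_linearIsometryEquiv volume reflect 1 fun x => x k * x l
  simp only [reflect, LinearIsometryEquiv.piLpCongrRight_apply, hkl, ↓reduceIte,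
    LinearIsometryEquiv.coe_refl, id_eq, LinearIsometryEquiv.coe_neg, mul_neg, integral_neg] at h
  linarith

theorem integral_mul_self_cond_closedBall_eq (k l : ι) :
    ∫ x : EuclideanSpace ℝ ι, x k * x k ∂volume[|closedBall 0 1] =
      ∫ x : EuclideanSpace ℝ ι, x l * x l ∂volume[|closedBall 0 1] := by
  classical
  have h := integral_cond_closedBall_comp_linearIsometryEquiv volume
    (LinearIsometryEquiv.piLpCongrLeft 2 ℝ ℝ (Equiv.swap l k)) 1 fun x => x k * x k
  simpa [LinearIsometryEquiv.piLpCongrLeft_apply, Equiv.piCongrLeft'_apply] using h.symm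

theorem integral_mul_cond_closedBall [DecidableEq ι] (k l : ι) :
    ∫ x : EuclideanSpace ℝ ι, x k * x l ∂volume[|closedBall 0 1] =
      if k = l then 1 / ((Fintype.card ι : ℝ) + 2) else 0 := by
  split_ifs with hkl
  · subst hkl
    have : Nonempty ι := ⟨k⟩
    have htrace := integral_norm_sq_cond_closedBall (volume : Measure (EuclideanSpace ℝ ι))
    simp_rw [EuclideanSpace.real_norm_sq_eq, finrank_euclideanSpace, sq] at htrace
    rw [integral_finsetSum _ fun i _ => integrable_mul_cond_closedBall i i 0 one_pos] at htrace
    simp only [integral_mul_self_cond_closedBall_eq _ k, Finset.sum_const, Finset.card_univ,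
      nsmul_eq_mul] at htrace
    have hcard : (Fintype.card ι : ℝ) ≠ 0 := by positivity
    field_simp at htrace ⊢
    exact htrace
  · exact integral_mul_cond_closedBall_of_ne hkl

end EuclideanBall

theorem integral_toEuclideanLin_mul_toEuclideanLin {ι m : Type*} [Fintype ι] [DecidableEq ι]
    {ν : Measure (EuclideanSpace ℝ ι)} {c : ℝ}
    (hint : ∀ k l, Integrable (fun x : EuclideanSpace ℝ ι => x k * x l) ν)
    (hmom : ∀ k l, ∫ x, x k * x l ∂ν = if k = l then c else 0) (A : Matrix m ι ℝ) (i j : m) :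
    ∫ x, toEuclideanLin A x i * toEuclideanLin A x j ∂ν = c * (A * Aᵀ) i j := by
  have hexpand (x : EuclideanSpace ℝ ι) : toEuclideanLin A x i * toEuclideanLin A x j =
      ∑ k, ∑ l, A i k * A j l * (x k * x l) := by
    simp only [ofLp_toLpLin, toLin'_apply, mulVec, dotProduct, Finset.sum_mul_sum]
    exact Finset.sum_congr rfl fun k _ => Finset.sum_congr rfl fun l _ => by ring
  simp_rw [hexpand]
  rw [integral_finsetSum _ fun k _ => integrable_finsetSum _ fun l _ => (hint k l).const_mul _]
  simp_rw [integral_finsetSum _ fun l _ => (hint _ l).const_mul _, integral_const_mul, hmom]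
  simp [mul_apply, Finset.mul_sum, mul_comm]

open scoped MatrixOrder in
theorem Matrix.PosDef.exists_isUnit_transpose_mul_self {ι : Type*} [Fintype ι] [DecidableEq ι]
    {Γ : Matrix ι ι ℝ} (hΓ : Γ.PosDef) : ∃ B : Matrix ι ι ℝ, IsUnit B ∧ Bᵀ * B = Γ := by
  obtain ⟨B, hB, rfl⟩ :=
    CStarAlgebra.isStrictlyPositive_iff_eq_star_mul_self.mp hΓ.isStrictlyPositive
  exact ⟨B, hB, rfl⟩

section Ellipsoid

variable {ι : Type*} [Fintype ι]

def ellipsoid (Γ : Matrix ι ι ℝ) : Set (EuclideanSpace ℝ ι) :=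
  {w | ∑ i, ∑ j, w i * Γ i j * w j ≤ 1}

theorem neg_ellipsoid (Γ : Matrix ι ι ℝ) : -ellipsoid Γ = ellipsoid Γ := by
  ext w
  simp [ellipsoid]

variable [DecidableEq ι]

theorem sum_sum_mul_transpose_mul_self_mul {m : Type*} [Fintype m] (B : Matrix m ι ℝ)
    (w : EuclideanSpace ℝ ι) :
    ∑ i, ∑ j, w i * (Bᵀ * B) i j * w j = ‖toEuclideanLin B w‖ ^ 2 := by
  rw [EuclideanSpace.real_norm_sq_eq]
  simp only [ofLp_toLpLin, toLin'_apply, mulVec, dotProduct, sq, mul_apply, transpose_apply,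
    Finset.mul_sum, Finset.sum_mul]
  conv_rhs => rw [Finset.sum_comm]
  refine Finset.sum_congr rfl fun x _ => ?_
  rw [Finset.sum_comm]
  exact Finset.sum_congr rfl fun y _ => Finset.sum_congr rfl fun i _ => by ring

theorem ellipsoid_transpose_mul_self {m : Type*} [Fintype m] (B : Matrix m ι ℝ) :
    ellipsoid (Bᵀ * B) = toEuclideanLin B ⁻¹' closedBall 0 1 := by
  ext w
  simp only [ellipsoid, Set.mem_ofPred_eq, Set.mem_preimage, mem_closedBall_zero_iff,
    sum_sum_mul_transpose_mul_self_mul]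
  exact sq_le_one_iff₀ (norm_nonneg _)

theorem integral_cond_ellipsoid_transpose_mul_self {B : Matrix ι ι ℝ} (hB : IsUnit B.det)
    {G : Type*} [NormedAddCommGroup G] [NormedSpace ℝ G] (g : EuclideanSpace ℝ ι → G) :
    ∫ w, g w ∂volume[|ellipsoid (Bᵀ * B)] =
      ∫ x, g (toEuclideanLin B⁻¹ x) ∂volume[|closedBall 0 1] := by
  let T := (toLinearEquiv (EuclideanSpace.basisFun ι ℝ).toBasis B hB).symm
  have hT : ellipsoid (Bᵀ * B) = T '' closedBall 0 1 := by
    rw [T.image_eq_preimage_symm, LinearEquiv.symm_symm, ellipsoid_transpose_mul_self]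
    rfl
  rw [hT, integral_cond_image_linearEquiv]
  rfl

end Ellipsoid

theorem uniform_ellipsoid_mean_covariance_general {d : ℕ}
    (Γ : Matrix (Fin d) (Fin d) ℝ) (hΓ : Γ.PosDef)
    (E : Set (EuclideanSpace ℝ (Fin d)))
    (hE : E = {w : EuclideanSpace ℝ (Fin d) | ∑ i, ∑ j, w i * Γ i j * w j ≤ 1})
    (μ : Measure (EuclideanSpace ℝ (Fin d)))
    (hμ : μ = (volume E)⁻¹ • volume.restrict E) :
    (∫ w, w ∂μ) = 0 ∧
    ∀ i j, (∫ w, w i * w j ∂μ) = (1 / ((d : ℝ) + 2)) * Γ⁻¹ i j := by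
  obtain rfl : μ = volume[|ellipsoid Γ] := by rw [hμ, hE]; rfl
  refine ⟨integral_id_cond_eq_zero_of_neg_eq _ (neg_ellipsoid Γ), fun i j => ?_⟩
  obtain ⟨B, hB, rfl⟩ := hΓ.exists_isUnit_transpose_mul_self
  rw [integral_cond_ellipsoid_transpose_mul_self ((isUnit_iff_isUnit_det B).mp hB),
    integral_toEuclideanLin_mul_toEuclideanLin
      (fun k l => integrable_mul_cond_closedBall k l 0 one_pos) integral_mul_cond_closedBall,
    Matrix.mul_inv_rev, transpose_nonsing_inv, Fintype.card_fin]

/-- The uniform distribution on the ellipsoid {w : wᵀΓw ≤ 1} has mean zero and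
covariance (1/(d+2))·Γ⁻¹. -/
theorem uniform_ellipsoid_mean_covariance {d : ℕ} (hd : 1 ≤ d)
    (Γ : Matrix (Fin d) (Fin d) ℝ) (hΓ : Γ.PosDef)
    (E : Set (EuclideanSpace ℝ (Fin d)))
    (hE : E = {w : EuclideanSpace ℝ (Fin d) | ∑ i, ∑ j, w i * Γ i j * w j ≤ 1})
    (μ : Measure (EuclideanSpace ℝ (Fin d)))
    (hμ : μ = (volume E)⁻¹ • volume.restrict E) :
    (∫ w, w ∂μ) = 0 ∧
    ∀ i j, (∫ w, w i * w j ∂μ) = (1 / ((d : ℝ) + 2)) * Γ⁻¹ i j :=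
  uniform_ellipsoid_mean_covariance_general Γ hΓ E hE μ hμ
end

section
/- Consider the scalar LQR problem with input gain b = 1, state cost q = 1, and input cost r = 1000. For a ∈ [0.3, 1.8], let p > 0 satisfy the scalar discrete algebraic Riccati equation p = a²p − a²p²/(p + 1000) + 1, and let k = −a·p/(p + 1000) be the corresponding LQR gain. Then for every a' ∈ [0.3, a], the closed-loop system satisfies |a' + k| < 0.97, and consequently the stationary variance σ = 1/(1 − (a' + k)²) satisfies σ ≤ 20. (Hence the scalar instance a* = 1.05 is (20, 0.75)-robustly stabilizable by certainty equivalence.) -/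
/-!
Clearing the denominator turns the Riccati equation into `(p - q)(p + r) = a² r p`, and the
nominal closed-loop coefficient is `a + k = a r / (p + r)`. Squaring it and substituting gives
`(a + k)² = r (p - 1) / (p (p + r))` when `q = 1`, which for `r = 1000` stays below `0.97²` for
every `p > 0`, whatever `a` is. This bounds `a' + k ≤ a + k` from above. From below, `a ≤ 1.8`
forces `p ≤ 2242`, hence `k = -a p / (p + 1000) > -1.27` and `a' + k ≥ 0.3 + k > -0.97`.
-/

namespace ScalarLQR

variable {a p q r : ℝ}

theorem riccati_mul_eq (hpr : p + r ≠ 0)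
    (hdare : p = a ^ 2 * p - a ^ 2 * p ^ 2 / (p + r) + q) :
    (p - q) * (p + r) = a ^ 2 * r * p := by
  field_simp at hdare
  linear_combination hdare

theorem add_lqrGain_eq (hpr : p + r ≠ 0) : a + -(a * p / (p + r)) = a * r / (p + r) := by
  field_simp
  ring

theorem closedLoop_sq_mul_eq (hpr : p + r ≠ 0) (hric : (p - q) * (p + r) = a ^ 2 * r * p) :
    (a * r / (p + r)) ^ 2 * (p * (p + r)) = r * (p - q) := by
  field_simp
  linear_combination (-r) * hric

theorem closedLoop_lt (hp : 0 < p) (hric : (p - 1) * (p + 1000) = a ^ 2 * 1000 * p) :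
    a * 1000 / (p + 1000) < 0.97 := by
  have hpr : 0 < p + 1000 := by linarith
  have hsq := closedLoop_sq_mul_eq hpr.ne' hric
  -- `0.9409 p² - 59.1 p + 1000` has negative discriminant, so it is positive.
  have hquad : 1000 * (p - 1) < 0.9409 * (p * (p + 1000)) := by
    nlinarith [sq_nonneg (9409 * p - 295500)]
  have hc2 : (a * 1000 / (p + 1000)) ^ 2 < 0.97 ^ 2 := by
    nlinarith [mul_pos hp hpr]
  exact lt_of_pow_lt_pow_left₀ 2 (by norm_num) hc2

theorem riccati_solution_le (hp : 0 < p) (ha0 : 0 ≤ a) (ha : a ≤ 1.8)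
    (hric : (p - 1) * (p + 1000) = a ^ 2 * 1000 * p) : p ≤ 2242 := by
  have ha2 : a ^ 2 ≤ 3.24 := by nlinarith
  nlinarith [mul_le_mul_of_nonneg_right ha2 hp.le]

theorem neg_lqrGain_lt (hp : 0 < p) (ha : a ≤ 1.8) (hp2242 : p ≤ 2242) :
    a * p / (p + 1000) < 1.27 := by
  rw [div_lt_iff₀ (by linarith)]
  nlinarith

theorem one_div_one_sub_sq_le {x ρ : ℝ} (hx : |x| ≤ ρ) (hρ : ρ < 1) :
    1 / (1 - x ^ 2) ≤ 1 / (1 - ρ ^ 2) := by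
  have hρ0 : 0 ≤ ρ := (abs_nonneg x).trans hx
  have hρ2 : 0 < 1 - ρ ^ 2 := by nlinarith
  have hx2 : x ^ 2 ≤ ρ ^ 2 := sq_le_sq' (abs_le.1 hx).1 (abs_le.1 hx).2
  exact one_div_le_one_div_of_le hρ2 (by linarith)

end ScalarLQR

open ScalarLQR in
/-- Robust stabilizability of the scalar example: for any a ∈ [0.3, 1.8], the CE gain
synthesized from a stabilizes every a' ∈ [0.3, a] with closed-loop coefficient below 0.97
and stationary variance at most 20 (hence a* = 1.05 is (20, 0.75)-robustly stabilizable
by certainty equivalence). -/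
theorem scalar_robust_stabilizability
    (a : ℝ) (ha : a ∈ Set.Icc (0.3 : ℝ) 1.8)
    (p : ℝ) (hp : 0 < p)
    (hdare : p = a ^ 2 * p - a ^ 2 * p ^ 2 / (p + 1000) + 1)
    (k : ℝ) (hk : k = -(a * p / (p + 1000))) :
    ∀ a' ∈ Set.Icc (0.3 : ℝ) a,
      |a' + k| < 0.97 ∧ 1 / (1 - (a' + k) ^ 2) ≤ 20 := by
  rintro a' ⟨ha'_low, ha'_high⟩
  obtain ⟨ha_low, ha_high⟩ := ha
  have hpr : p + 1000 ≠ 0 := by positivity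
  have hric : (p - 1) * (p + 1000) = a ^ 2 * 1000 * p := riccati_mul_eq hpr hdare
  have hnominal : a + k < 0.97 := by
    rw [hk, add_lqrGain_eq hpr]
    exact closedLoop_lt hp hric
  have hgain : a * p / (p + 1000) < 1.27 :=
    neg_lqrGain_lt hp ha_high (riccati_solution_le hp (by linarith) ha_high hric)
  have hstable : |a' + k| < 0.97 := abs_lt.2 ⟨by linarith, by linarith⟩
  refine ⟨hstable, (one_div_one_sub_sq_le hstable.le (by norm_num)).trans ?_⟩
  norm_num
end

section
/- Consider the scalar LQR problem with input gain b = 1, state cost q = 1, and input cost r = 1000, and the nominal estimate â = 1.01. If p > 0 satisfies the scalar discrete algebraic Riccati equation p = (1.01)²p − (1.01)²p²/(p + 1000) + 1 and k = −1.01·p/(p + 1000) is the corresponding certainty-equivalent LQR gain, then 1.05 + k > 1; in particular the certainty-equivalent controller synthesized from â = 1.01 fails to stabilize the true scalar system with a* = 1.05. -/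
/-!
Clearing the denominator turns the scalar Riccati equation into the quadratic
`p ^ 2 - 21.1 * p - 1000 = 0`, whose positive root (≈ 43.9) lies below `52`, where the
quadratic is already positive. The gain magnitude `1.01 * p / (p + 1000)` is below `0.05`
exactly when `p < 50 / 0.96 ≈ 52.08`, so `1.05 + k > 1`.
-/

/-- The scalar Riccati operator with input gain `b = 1`. -/
noncomputable def scalarRiccati (a q r p : ℝ) : ℝ :=
  a ^ 2 * p - a ^ 2 * p ^ 2 / (p + r) + q

theorem scalarRiccati_eq_self_iff {a q r p : ℝ} (h : p + r ≠ 0) :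
    scalarRiccati a q r p = p ↔ p ^ 2 + (r * (1 - a ^ 2) - q) * p - q * r = 0 := by
  unfold scalarRiccati
  constructor <;> intro hp
  · field_simp at hp
    linear_combination -hp
  · field_simp
    linear_combination -hp

theorem lt_of_quadratic_eq_zero {β γ p m : ℝ} (hp : p ^ 2 + β * p + γ = 0)
    (hm : 0 < m ^ 2 + β * m + γ) (hvertex : 0 ≤ 2 * m + β) : p < m := by
  by_contra! hmp
  nlinarith [mul_nonneg (sub_nonneg.mpr hmp) (by linarith : (0 : ℝ) ≤ p + m + β)]

/-- The certainty-equivalent controller synthesized from the estimate â = 1.01 fails to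
stabilize the true scalar system with a* = 1.05: the closed-loop coefficient exceeds 1. -/
theorem scalar_ce_fails_to_stabilize
    (p : ℝ) (hp : 0 < p)
    (hdare : p = (1.01 : ℝ) ^ 2 * p - (1.01 : ℝ) ^ 2 * p ^ 2 / (p + 1000) + 1)
    (k : ℝ) (hk : k = -((1.01 : ℝ) * p / (p + 1000))) :
    (1.05 : ℝ) + k > 1 := by
  have hden : 0 < p + 1000 := by linarith
  have hquad : p ^ 2 + (1000 * (1 - 1.01 ^ 2) - 1) * p - 1 * 1000 = 0 :=
    (scalarRiccati_eq_self_iff hden.ne').mp hdare.symm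
  have hp52 : p < 52 :=
    lt_of_quadratic_eq_zero (β := -21.1) (γ := -1000) (by linear_combination hquad)
      (by norm_num) (by norm_num)
  have hgain : 1.01 * p / (p + 1000) < 0.05 := by
    rw [div_lt_iff₀ hden]
    linarith
  rw [hk]
  linarith
end
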